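/- arXiv:2303.12428 — 7 statements merged into one kernel-verified Lean document; each statement's English description precedes it below -/
import Mathlib

section
/- Let H be a time-independent Hamiltonian on a bipartite system H_S ⊗ H_M and let {Π_m} be the rank-one projectors onto an orthonormal basis of H_M. Then H commutes with each 1⊗Π_m (equivalently H = Σ_m h_m ⊗ Π_m is block diagonal) if and only if for every state ρ_0 that is block diagonal in this basis (i.e. ρ_0 = Σ_m ρ_m ⊗ Π_m), the evolved state e^{-itH} ρ_0 e^{itH} is block diagonal in this basis for all times t. -/
/-!
Write `Q m = 1 ⊗ P m`. The `Q m` are idempotents summing to `1`, pairwise commuting, and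
`Q m ρ Q m = r ⊗ P m` for some `r` because `P m` has rank one; hence a matrix is classical iff
it commutes with every `Q m`. If `H` commutes with `Q m`, so do the propagators `exp (∓ i t H)`,
and classicality is preserved. Conversely, evolve the classical state `Q m / dim H_S`:
differentiating `[Q m, ρ(t)] = 0` at `t = 0` gives `[Q m, [H, Q m]] = 0`, and for an
idempotent `Q` this already forces `[H, Q] = 0`.
-/

open Matrix
open scoped Kronecker ComplexOrder

namespace Stmt1

variable {s μ : Type*} [Fintype s] [DecidableEq s] [Fintype μ] [DecidableEq μ]

/-- A density matrix: positive semidefinite with unit trace. -/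
def IsDensity (ρ : Matrix (s × μ) (s × μ) ℂ) : Prop :=
  ρ.PosSemidef ∧ ρ.trace = 1

/-- A state on `H_S ⊗ H_M` is classical (block diagonal) w.r.t. the rank-one projectors
`P m` on the mediator if it has the form `Σ_m ρ_m ⊗ P m`. -/
def IsClassical (P : μ → Matrix μ μ ℂ) (ρ : Matrix (s × μ) (s × μ) ℂ) : Prop :=
  ∃ r : μ → Matrix s s ℂ, ρ = ∑ m, r m ⊗ₖ P m

section Ring

variable {R : Type*} [Ring R]

theorem _root_.IsIdempotentElem.commute_of_commute_commutator {H Q : R} (hQ : IsIdempotentElem Q)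
    (h : Commute Q (H * Q - Q * H)) : Commute H Q := by
  -- multiplying `key` by `Q` on the left, resp. on the right, kills one side of it
  have key : Q * H * Q - Q * H = H * Q - Q * H * Q := by
    simpa only [mul_sub, sub_mul, ← mul_assoc, hQ.eq, mul_assoc _ Q Q] using h.eq
  have hl : Q * H * Q = Q * H := by
    simpa only [mul_sub, ← mul_assoc, hQ.eq, sub_self, sub_eq_zero] using congrArg (Q * ·) key
  have hr : H * Q = Q * H * Q := by
    simpa only [sub_mul, mul_assoc, hQ.eq, sub_self, eq_comm, sub_eq_zero] using
      congrArg (· * Q) key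
  exact hr.trans hl

theorem sum_mul_mul_eq_of_forall_commute {ι : Type*} [Fintype ι] {Q : ι → R}
    (hQ : ∀ i, IsIdempotentElem (Q i)) (hsum : ∑ i, Q i = 1) {ρ : R}
    (hρ : ∀ i, Commute (Q i) ρ) : ∑ i, Q i * ρ * Q i = ρ := by
  simp_rw [(hρ _).eq, mul_assoc, (hQ _).eq, ← Finset.mul_sum, hsum, mul_one]

end Ring

section Exponential

open NormedSpace

variable {𝔸 : Type*} [NormedRing 𝔸] [NormedAlgebra ℂ 𝔸] [CompleteSpace 𝔸]

theorem hasDerivAt_exp_conj (H ρ : 𝔸) :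
    HasDerivAt (fun t : ℝ => exp ((-(Complex.I * t)) • H) * ρ * exp ((Complex.I * t) • H))
      ((-Complex.I) • (H * ρ - ρ * H)) 0 := by
  have hexp : ∀ c : ℂ, HasDerivAt (fun t : ℝ => exp ((c * t) • H)) (c • H) 0 := by
    intro c
    have := hasDerivAt_exp_smul_const (𝕂 := ℝ) (c • H) 0
    simp only [zero_smul, exp_zero, one_mul] at this
    convert this using 3 with t
    rw [mul_comm, ← smul_smul, Complex.coe_smul]
  have := ((hexp (-Complex.I)).mul_const ρ).mul (hexp Complex.I)
  simp only [neg_mul, Complex.ofReal_zero, mul_zero, zero_smul, exp_zero, one_mul, mul_one] at this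
  refine this.congr_deriv ?_
  rw [smul_sub, smul_mul_assoc, mul_smul_comm, neg_smul, neg_smul]
  abel

theorem commute_commutator_of_forall_commute_exp_conj {H ρ Q : 𝔸}
    (h : ∀ t : ℝ, Commute Q (exp ((-(Complex.I * t)) • H) * ρ * exp ((Complex.I * t) • H))) :
    Commute Q (H * ρ - ρ * H) := by
  have hderiv :=
    ((hasDerivAt_exp_conj H ρ).const_mul Q).sub ((hasDerivAt_exp_conj H ρ).mul_const Q)
  have hzero := hderiv.unique <| (hasDerivAt_const (0 : ℝ) (0 : 𝔸)).congr_of_eventuallyEq <|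
    .of_forall fun t => sub_eq_zero.2 (h t).eq
  rw [mul_smul_comm, smul_mul_assoc, ← smul_sub, smul_eq_zero, sub_eq_zero] at hzero
  exact hzero.resolve_left (neg_ne_zero.2 Complex.I_ne_zero)

theorem commute_of_forall_commute_exp_conj_smul {H Q : 𝔸} (hQ : IsIdempotentElem Q) {c : ℂ}
    (hc : c ≠ 0)
    (h : ∀ t : ℝ, Commute Q (exp ((-(Complex.I * t)) • H) * (c • Q) * exp ((Complex.I * t) • H))) :
    Commute H Q := by
  have hcomm := commute_commutator_of_forall_commute_exp_conj h
  rw [mul_smul_comm, smul_mul_assoc, ← smul_sub] at hcomm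
  refine hQ.commute_of_commute_commutator ?_
  simpa only [inv_smul_smul₀ hc] using hcomm.smul_right c⁻¹

end Exponential

section Kronecker

variable {R n : Type*} [CommSemiring R]

omit [Fintype s] in
theorem one_kronecker_sum {ι : Type*} (t : Finset ι) (A : ι → Matrix n n R) :
    ∑ i ∈ t, (1 : Matrix s s R) ⊗ₖ A i = 1 ⊗ₖ ∑ i ∈ t, A i :=
  (map_sum (kroneckerBilinear (R := R) (1 : Matrix s s R)) A t).symm

variable [Fintype n]

theorem _root_.Commute.one_kronecker {A C : Matrix n n R} (h : Commute A C) (B : Matrix s s R) :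
    Commute ((1 : Matrix s s R) ⊗ₖ A) (B ⊗ₖ C) := by
  rw [Commute, SemiconjBy, ← mul_kronecker_mul, ← mul_kronecker_mul, one_mul, mul_one, h.eq]

theorem _root_.IsIdempotentElem.one_kronecker {A : Matrix n n R} (h : IsIdempotentElem A) :
    IsIdempotentElem ((1 : Matrix s s R) ⊗ₖ A) := by
  rw [IsIdempotentElem, ← mul_kronecker_mul, one_mul, h.eq]

theorem one_kronecker_vecMulVec_mul_mul (u w x y : n → R) (ρ : Matrix (s × n) (s × n) R) :
    (1 ⊗ₖ vecMulVec u w) * ρ * (1 ⊗ₖ vecMulVec x y) =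
      (of fun a b => ∑ k, ∑ l, w k * ρ (a, k) (b, l) * x l) ⊗ₖ vecMulVec u y := by
  ext ⟨a, i⟩ ⟨b, j⟩
  simp only [mul_apply, kroneckerMap_apply, one_apply, vecMulVec_apply, ite_mul, one_mul,
    zero_mul, Fintype.sum_prod_type, Finset.sum_ite_irrel, Finset.sum_const_zero,
    Finset.sum_ite_eq, Finset.mem_univ, ↓reduceIte, mul_ite, Finset.sum_mul, mul_zero,
    Finset.sum_ite_eq', of_apply]
  rw [Finset.sum_comm]
  exact Finset.sum_congr rfl fun _ _ => Finset.sum_congr rfl fun _ _ => by ring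

end Kronecker

section Orthonormal

variable {R n : Type*} [CommRing R] [StarRing R] [Fintype n] [DecidableEq n] {v : n → n → R}

theorem vecMulVec_star_mul_vecMulVec_star
    (hv : ∀ i j, star (v i) ⬝ᵥ v j = if i = j then 1 else 0) (i j : n) :
    vecMulVec (v i) (star (v i)) * vecMulVec (v j) (star (v j)) =
      if i = j then vecMulVec (v i) (star (v i)) else 0 := by
  rw [vecMulVec_mul_vecMulVec, hv]
  split_ifs with h
  · rw [one_smul, h]
  · rw [zero_smul, vecMulVec_zero]

theorem isIdempotentElem_vecMulVec_star
    (hv : ∀ i j, star (v i) ⬝ᵥ v j = if i = j then 1 else 0) (i : n) :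
    IsIdempotentElem (vecMulVec (v i) (star (v i))) := by
  rw [IsIdempotentElem, vecMulVec_star_mul_vecMulVec_star hv, if_pos rfl]

theorem commute_vecMulVec_star (hv : ∀ i j, star (v i) ⬝ᵥ v j = if i = j then 1 else 0)
    (i j : n) : Commute (vecMulVec (v i) (star (v i))) (vecMulVec (v j) (star (v j))) := by
  by_cases h : i = j
  · subst h
    exact Commute.refl _
  · rw [Commute, SemiconjBy, vecMulVec_star_mul_vecMulVec_star hv,
      vecMulVec_star_mul_vecMulVec_star hv, if_neg h, if_neg (Ne.symm h)]

theorem sum_vecMulVec_star_eq_one (hv : ∀ i j, star (v i) ⬝ᵥ v j = if i = j then 1 else 0) :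
    ∑ i, vecMulVec (v i) (star (v i)) = 1 := by
  have hU : (of v)ᵀ ∈ unitaryGroup n R := mem_unitaryGroup_iff'.2 <| by
    ext i j
    simpa [mul_apply, dotProduct, one_apply] using hv i j
  rw [← mem_unitaryGroup_iff.1 hU]
  ext i j
  simp [mul_apply, vecMulVec_apply, Matrix.sum_apply]

end Orthonormal

theorem isClassical_iff_forall_commute {v : μ → μ → ℂ}
    (hv : ∀ i j, star (v i) ⬝ᵥ v j = if i = j then 1 else 0) (ρ : Matrix (s × μ) (s × μ) ℂ) :
    IsClassical (fun m => vecMulVec (v m) (star (v m))) ρ ↔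
      ∀ m, Commute ((1 : Matrix s s ℂ) ⊗ₖ vecMulVec (v m) (star (v m))) ρ := by
  constructor
  · rintro ⟨r, rfl⟩ m
    exact Commute.sum_right _ _ _ fun m' _ => (commute_vecMulVec_star hv m m').one_kronecker _
  · intro hρ
    refine ⟨_, (sum_mul_mul_eq_of_forall_commute
      (fun m => (isIdempotentElem_vecMulVec_star hv m).one_kronecker) ?_ hρ).symm.trans
      (Finset.sum_congr rfl fun m _ => one_kronecker_vecMulVec_mul_mul _ _ _ _ ρ)⟩
    rw [one_kronecker_sum, sum_vecMulVec_star_eq_one hv, one_kronecker_one]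

omit [DecidableEq μ] in
theorem isDensity_inv_card_smul_one_kronecker [Nonempty s] {u : μ → ℂ} (hu : star u ⬝ᵥ u = 1) :
    IsDensity ((Fintype.card s : ℂ)⁻¹ • ((1 : Matrix s s ℂ) ⊗ₖ vecMulVec u (star u))) := by
  constructor
  · exact (PosSemidef.one.kronecker (posSemidef_vecMulVec_self_star u)).smul (by positivity)
  · rw [trace_smul, trace_kronecker, trace_one, trace_vecMulVec, dotProduct_comm, hu, mul_one,
      smul_eq_mul, inv_mul_cancel₀ (Nat.cast_ne_zero.2 Fintype.card_ne_zero)]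

theorem classical_interaction_iff_preserves_classical_general
    (v : μ → μ → ℂ)
    (honb : ∀ m m', ∑ i, (starRingEnd ℂ) (v m i) * v m' i = if m = m' then 1 else 0)
    (P : μ → Matrix μ μ ℂ)
    (hP : ∀ m, P m = Matrix.vecMulVec (v m) (star (v m)))
    (H : Matrix (s × μ) (s × μ) ℂ) :
    (∀ m, H * ((1 : Matrix s s ℂ) ⊗ₖ P m) = ((1 : Matrix s s ℂ) ⊗ₖ P m) * H) ↔
      (∀ ρ₀ : Matrix (s × μ) (s × μ) ℂ, IsDensity ρ₀ → IsClassical P ρ₀ → ∀ t : ℝ,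
        IsClassical P
          (NormedSpace.exp ((-(Complex.I * t)) • H) * ρ₀ *
            NormedSpace.exp ((Complex.I * t) • H))) := by
  have hv : ∀ m m', star (v m) ⬝ᵥ v m' = if m = m' then 1 else 0 := honb
  obtain rfl : P = fun m => vecMulVec (v m) (star (v m)) := funext hP
  simp only [isClassical_iff_forall_commute hv]
  refine ⟨fun hcomm ρ₀ _ hρ₀ t m => ?_, fun h m => ?_⟩
  · have hexp (c : ℂ) := (Commute.smul_left (hcomm m) c).exp_left.symm
    exact ((hexp _).mul_right (hρ₀ m)).mul_right (hexp _)
  · rcases isEmpty_or_nonempty s with hs | hs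
    · exact Subsingleton.elim _ _
    have hρ := isDensity_inv_card_smul_one_kronecker (s := s) (u := v m) (by rw [hv, if_pos rfl])
    have hclass (m' : μ) := ((commute_vecMulVec_star hv m' m).one_kronecker
      (1 : Matrix s s ℂ)).smul_right (Fintype.card s : ℂ)⁻¹
    let : NormedRing (Matrix (s × μ) (s × μ) ℂ) := Matrix.linftyOpNormedRing
    let : NormedAlgebra ℂ (Matrix (s × μ) (s × μ) ℂ) := Matrix.linftyOpNormedAlgebra
    refine (commute_of_forall_commute_exp_conj_smul
      (isIdempotentElem_vecMulVec_star hv m).one_kronecker ?_ fun t => h _ hρ hclass t m).eq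
    exact inv_ne_zero (Nat.cast_ne_zero.2 Fintype.card_ne_zero)

/-- Let `H` be a Hermitian Hamiltonian on `H_S ⊗ H_M` and let `P m` be the
rank-one projectors onto an orthonormal basis `v` of the mediator `H_M`.  Then `H` commutes
with each `1 ⊗ P m` if and only if every classical (block-diagonal) state `ρ₀` stays
classical under the evolution `e^{-itH} ρ₀ e^{itH}` for all times `t`. -/
theorem classical_interaction_iff_preserves_classical
    (v : μ → μ → ℂ)
    (honb : ∀ m m', ∑ i, (starRingEnd ℂ) (v m i) * v m' i = if m = m' then 1 else 0)
    (P : μ → Matrix μ μ ℂ)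
    (hP : ∀ m, P m = Matrix.vecMulVec (v m) (star (v m)))
    (H : Matrix (s × μ) (s × μ) ℂ) (hH : H.IsHermitian) :
    (∀ m, H * ((1 : Matrix s s ℂ) ⊗ₖ P m) = ((1 : Matrix s s ℂ) ⊗ₖ P m) * H) ↔
      (∀ ρ₀ : Matrix (s × μ) (s × μ) ℂ, IsDensity ρ₀ → IsClassical P ρ₀ → ∀ t : ℝ,
        IsClassical P
          (NormedSpace.exp ((-(Complex.I * t)) • H) * ρ₀ *
            NormedSpace.exp ((Complex.I * t) • H))) :=
  classical_interaction_iff_preserves_classical_general v honb P hP H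

end Stmt1
end

section
/- There exist no two-qubit unitaries V_{AM} acting on qubits A,M and V_{BM} acting on qubits B,M (tensored with identity on the remaining qubit) such that U_{AM} U_{BM} = V_{BM} V_{AM}, where U_{AM} = (1 + i Z_A X_M)/√2 and U_{BM} = (1 + i Z_B Z_M)/√2. -/
open Matrix
open scoped Kronecker

namespace Stmt3

/-- A three-qubit operator (on `A × (B × M)`) acts nontrivially only on qubits `A` and `M`
(identity on `B`). -/
def ActsOnAM (U : Matrix (Fin 2 × Fin 2 × Fin 2) (Fin 2 × Fin 2 × Fin 2) ℂ) : Prop :=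
  ∃ u : Matrix (Fin 2 × Fin 2) (Fin 2 × Fin 2) ℂ, ∀ a b m a' b' m',
    U (a, b, m) (a', b', m') = u (a, m) (a', m') * (if b = b' then 1 else 0)

/-- A three-qubit operator acts nontrivially only on qubits `B` and `M` (identity on `A`). -/
def ActsOnBM (U : Matrix (Fin 2 × Fin 2 × Fin 2) (Fin 2 × Fin 2 × Fin 2) ℂ) : Prop :=
  ∃ u : Matrix (Fin 2 × Fin 2) (Fin 2 × Fin 2) ℂ, ∀ a b m a' b' m',
    U (a, b, m) (a', b', m') = u (b, m) (b', m') * (if a = a' then 1 else 0)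

/-- Pauli Z. -/
def PZ : Matrix (Fin 2) (Fin 2) ℂ := !![1, 0; 0, -1]

/-- Pauli X. -/
def PX : Matrix (Fin 2) (Fin 2) ℂ := !![0, 1; 1, 0]

/-- `U_{AM} = (1 + i Z_A X_M)/√2`. -/
noncomputable def UAM : Matrix (Fin 2 × Fin 2 × Fin 2) (Fin 2 × Fin 2 × Fin 2) ℂ :=
  ((Real.sqrt 2 : ℂ))⁻¹ • (1 + Complex.I • (PZ ⊗ₖ ((1 : Matrix (Fin 2) (Fin 2) ℂ) ⊗ₖ PX)))

/-- `U_{BM} = (1 + i Z_B Z_M)/√2`. -/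
noncomputable def UBM : Matrix (Fin 2 × Fin 2 × Fin 2) (Fin 2 × Fin 2 × Fin 2) ℂ :=
  ((Real.sqrt 2 : ℂ))⁻¹ • (1 + Complex.I • ((1 : Matrix (Fin 2) (Fin 2) ℂ) ⊗ₖ (PZ ⊗ₖ PZ)))

open Complex

private lemma h2sq : ((Real.sqrt 2 : ℂ))⁻¹ ^ 2 = 2⁻¹ := by
  rw [sq, ← mul_inv, ← Complex.ofReal_mul, Real.mul_self_sqrt (by norm_num)]
  norm_num

private lemma hprod : UAM * UBM = (2:ℂ)⁻¹ •
    (1 + Complex.I • (PZ ⊗ₖ ((1 : Matrix (Fin 2) (Fin 2) ℂ) ⊗ₖ PX))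
       + Complex.I • ((1 : Matrix (Fin 2) (Fin 2) ℂ) ⊗ₖ (PZ ⊗ₖ PZ))
       - PZ ⊗ₖ (PZ ⊗ₖ (PX * PZ))) := by
  rw [UAM, UBM, Matrix.smul_mul, Matrix.mul_smul, smul_smul, ← sq, h2sq]
  congr 1
  have hK : (PZ ⊗ₖ ((1 : Matrix (Fin 2) (Fin 2) ℂ) ⊗ₖ PX)) *
      ((1 : Matrix (Fin 2) (Fin 2) ℂ) ⊗ₖ (PZ ⊗ₖ PZ)) = PZ ⊗ₖ (PZ ⊗ₖ (PX * PZ)) := by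
    rw [← Matrix.mul_kronecker_mul, ← Matrix.mul_kronecker_mul, Matrix.mul_one, Matrix.one_mul]
  simp only [mul_add, add_mul, Matrix.one_mul, Matrix.mul_one, Matrix.smul_mul,
    Matrix.mul_smul, smul_smul, Complex.I_mul_I, hK, neg_one_smul]
  abel

/-- The four "diagonal" 2×2 blocks of `U_{AM} U_{BM}` (in the `A,B` indices), as explicit
matrices acting on qubit `M`. -/
private noncomputable def blk : Fin 2 → Fin 2 → Matrix (Fin 2) (Fin 2) ℂ :=
  !![!![(1+I)/2, (1+I)/2; (-1+I)/2, (1-I)/2], !![(1-I)/2, (-1+I)/2; (1+I)/2, (1+I)/2];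
     !![(1+I)/2, (-1-I)/2; (1-I)/2, (1-I)/2], !![(1-I)/2, (1-I)/2; (-1-I)/2, (1+I)/2]]

private lemma lhs_entry : ∀ a b m m' : Fin 2,
    (UAM * UBM) (a, b, m) (a, b, m') = (blk a b) m m' := by
  intro a b m m'
  rw [hprod]
  fin_cases a <;> fin_cases b <;> fin_cases m <;> fin_cases m' <;>
    · simp [blk, PZ, PX, Matrix.smul_apply, Matrix.add_apply, Matrix.sub_apply, Matrix.one_apply,
        Matrix.kroneckerMap_apply, Matrix.mul_apply, Fin.sum_univ_two, Prod.ext_iff]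
      ring

private lemma hdetC : Matrix.det (blk 1 0) = 1 := by
  show Matrix.det !![(1+I)/2, (-1-I)/2; (1-I)/2, (1-I)/2] = 1
  rw [Matrix.det_fin_two_of]
  ring_nf
  rw [Complex.I_sq]
  ring

private lemma hfin : blk 1 1 * ((blk 1 0).adjugate * blk 0 0) ≠ blk 0 1 := by
  show !![(1-I)/2, (1-I)/2; (-1-I)/2, (1+I)/2] *
    ((Matrix.adjugate !![(1+I)/2, (-1-I)/2; (1-I)/2, (1-I)/2]) *
      !![(1+I)/2, (1+I)/2; (-1+I)/2, (1-I)/2]) ≠ !![(1-I)/2, (-1+I)/2; (1+I)/2, (1+I)/2]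
  intro h
  have h00 := congrFun (congrFun h 0) 0
  simp [Matrix.adjugate_fin_two_of, Matrix.mul_apply, Fin.sum_univ_two] at h00
  rw [Complex.ext_iff] at h00
  norm_num at h00

/-- There are no two-qubit unitaries `V_{AM}` (acting on `A, M`) and `V_{BM}`
(acting on `B, M`) with `U_{AM} U_{BM} = V_{BM} V_{AM}`. -/
theorem no_reverse_decomposition :
    ¬ ∃ V W : Matrix (Fin 2 × Fin 2 × Fin 2) (Fin 2 × Fin 2 × Fin 2) ℂ,
      V ∈ Matrix.unitaryGroup (Fin 2 × Fin 2 × Fin 2) ℂ ∧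
      W ∈ Matrix.unitaryGroup (Fin 2 × Fin 2 × Fin 2) ℂ ∧
      ActsOnAM V ∧ ActsOnBM W ∧ UAM * UBM = W * V := by
  rintro ⟨V, W, -, -, ⟨u, hu⟩, ⟨w, hw⟩, heq⟩
  -- the scalar form of the hypothesis on the diagonal `A,B` blocks
  have key : ∀ a b m m' : Fin 2, (UAM * UBM) (a, b, m) (a, b, m') =
      w (b, m) (b, 0) * u (a, 0) (a, m') + w (b, m) (b, 1) * u (a, 1) (a, m') := by
    intro a b m m'
    rw [heq]
    fin_cases a <;> fin_cases b <;>
      simp [Matrix.mul_apply, Fintype.sum_prod_type, Fin.sum_univ_two, hu, hw]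
  -- the block matrix equations `W_b * U_a = blk a b`
  have block : ∀ a b : Fin 2,
      (Matrix.of fun m m' => w (b, m) (b, m')) * (Matrix.of fun m m' => u (a, m) (a, m')) =
        blk a b := by
    intro a b
    ext m m'
    rw [Matrix.mul_apply, Fin.sum_univ_two]
    exact (key a b m m').symm.trans (lhs_entry a b m m')
  set U0 : Matrix (Fin 2) (Fin 2) ℂ := Matrix.of fun m m' => u (0, m) (0, m') with hU0
  set U1 : Matrix (Fin 2) (Fin 2) ℂ := Matrix.of fun m m' => u (1, m) (1, m') with hU1
  set W0 : Matrix (Fin 2) (Fin 2) ℂ := Matrix.of fun m m' => w (0, m) (0, m') with hW0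
  set W1 : Matrix (Fin 2) (Fin 2) ℂ := Matrix.of fun m m' => w (1, m) (1, m') with hW1
  have hA : W0 * U0 = blk 0 0 := block 0 0
  have hB : W1 * U0 = blk 0 1 := block 0 1
  have hC : W0 * U1 = blk 1 0 := block 1 0
  have hD : W1 * U1 = blk 1 1 := block 1 1
  have hk : U1.det ≠ 0 := by
    intro h
    have h1 : W0.det * U1.det = 1 := by rw [← Matrix.det_mul, hC, hdetC]
    rw [h, mul_zero] at h1
    exact zero_ne_one h1
  set S : Matrix (Fin 2) (Fin 2) ℂ := U1.adjugate * U0 with hSdef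
  have hCS : blk 1 0 * S = U1.det • blk 0 0 := by
    rw [hSdef, ← hC, ← hA, Matrix.mul_assoc, ← Matrix.mul_assoc U1, Matrix.mul_adjugate,
      Matrix.smul_mul, Matrix.one_mul, Matrix.mul_smul]
  have hDS : blk 1 1 * S = U1.det • blk 0 1 := by
    rw [hSdef, ← hD, ← hB, Matrix.mul_assoc, ← Matrix.mul_assoc U1, Matrix.mul_adjugate,
      Matrix.smul_mul, Matrix.one_mul, Matrix.mul_smul]
  have hS : S = U1.det • ((blk 1 0).adjugate * blk 0 0) := by
    calc S = ((blk 1 0).adjugate * blk 1 0) * S := by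
          rw [Matrix.adjugate_mul, hdetC, one_smul, Matrix.one_mul]
    _ = (blk 1 0).adjugate * (blk 1 0 * S) := by rw [Matrix.mul_assoc]
    _ = U1.det • ((blk 1 0).adjugate * blk 0 0) := by rw [hCS, Matrix.mul_smul]
  have hfinal : blk 1 1 * ((blk 1 0).adjugate * blk 0 0) = blk 0 1 := by
    have h1 : U1.det • (blk 1 1 * ((blk 1 0).adjugate * blk 0 0)) = U1.det • blk 0 1 := by
      rw [← hDS, hS, Matrix.mul_smul]
    exact smul_right_injective _ hk h1
  exact hfin hfinal

end Stmt3
end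

section
/- A unitary U on H_A ⊗ H_B ⊗ H_M is decomposable as a product U = U_{BM} U_{AM} of unitaries (with U_{AM} identity on B and U_{BM} identity on A) if and only if the channel ρ ↦ U ρ U† can be written as a composition Λ_{BM} ∘ Λ_{AM} of completely positive trace-preserving maps, with Λ_{AM} acting trivially on B and Λ_{BM} acting trivially on A. -/
open Matrix
open scoped Kronecker ComplexOrder

set_option linter.unusedSectionVars false
set_option maxHeartbeats 1000000

namespace Stmt7

/-- A density matrix: positive semidefinite with unit trace. -/
def IsDensity {ι : Type*} [Fintype ι] (ρ : Matrix ι ι ℂ) : Prop :=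
  ρ.PosSemidef ∧ ρ.trace = 1

/-- A completely positive trace-preserving map, presented by a Kraus decomposition
(equivalent to CPTP in finite dimensions). -/
def IsCPTP {ι κ : Type*} [Fintype ι] [DecidableEq ι] [Fintype κ] [DecidableEq κ]
    (Φ : Matrix ι ι ℂ → Matrix κ κ ℂ) : Prop :=
  ∃ (N : ℕ) (K : Fin N → Matrix κ ι ℂ),
    (∀ ρ, Φ ρ = ∑ i, K i * ρ * (K i)ᴴ) ∧ ∑ i, (K i)ᴴ * K i = 1

/-- The extension `Λ' ⊗ id_B` of a map `Λ'` on `A ⊗ M` to the tripartite space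
`A ⊗ B ⊗ M` (indices ordered as `A × (B × M)`), acting trivially on `B`. -/
def ExtAM {α β μ : Type*} (Λ : Matrix (α × μ) (α × μ) ℂ → Matrix (α × μ) (α × μ) ℂ) :
    Matrix (α × β × μ) (α × β × μ) ℂ → Matrix (α × β × μ) (α × β × μ) ℂ :=
  fun ρ x y => Λ (fun p q => ρ (p.1, x.2.1, p.2) (q.1, y.2.1, q.2)) (x.1, x.2.2) (y.1, y.2.2)

/-- The extension `id_A ⊗ Λ'` of a map `Λ'` on `B ⊗ M` to the tripartite space,
acting trivially on `A`. -/
def ExtBM {α β μ : Type*} (Λ : Matrix (β × μ) (β × μ) ℂ → Matrix (β × μ) (β × μ) ℂ) :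
    Matrix (α × β × μ) (α × β × μ) ℂ → Matrix (α × β × μ) (α × β × μ) ℂ :=
  fun ρ x y => Λ (fun p q => ρ (x.1, p) (y.1, q)) x.2 y.2

/-- The product state `σ_{AM} ⊗ σ_B` arranged on the tripartite space `A × (B × M)`. -/
def prodAMB {α β μ : Type*} (σAM : Matrix (α × μ) (α × μ) ℂ) (σB : Matrix β β ℂ) :
    Matrix (α × β × μ) (α × β × μ) ℂ :=
  fun x y => σAM (x.1, x.2.2) (y.1, y.2.2) * σB x.2.1 y.2.1

/-- The product state `ρ_{AB} ⊗ σ_M` arranged on the tripartite space `A × (B × M)`. -/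
def prodABM {α β μ : Type*} (ρAB : Matrix (α × β) (α × β) ℂ) (σM : Matrix μ μ ℂ) :
    Matrix (α × β × μ) (α × β × μ) ℂ :=
  fun x y => ρAB (x.1, x.2.1) (y.1, y.2.1) * σM x.2.2 y.2.2

/-- Partial trace over the mediator `M`. -/
noncomputable def ptraceM {α β μ : Type*} [Fintype μ] (X : Matrix (α × β × μ) (α × β × μ) ℂ) :
    Matrix (α × β) (α × β) ℂ :=
  fun p q => ∑ m, X (p.1, p.2, m) (q.1, q.2, m)

/-- Partial trace over the second tensor factor. -/
noncomputable def ptrace2 {ι κ : Type*} [Fintype κ] (X : Matrix (ι × κ) (ι × κ) ℂ) : Matrix ι ι ℂ :=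
  fun i j => ∑ k, X (i, k) (j, k)

/-- Partial trace over `B` and `M`. -/
noncomputable def ptraceBM {α β μ : Type*} [Fintype β] [Fintype μ] (X : Matrix (α × β × μ) (α × β × μ) ℂ) :
    Matrix α α ℂ :=
  fun a a' => ∑ b, ∑ m, X (a, b, m) (a', b, m)

variable {α β μ : Type*} [Fintype α] [DecidableEq α] [Fintype β] [DecidableEq β]
  [Fintype μ] [DecidableEq μ]

/-- An operator on `H_A ⊗ H_B ⊗ H_M` acting as identity on `B`. -/
def ActsOnAM (U : Matrix (α × β × μ) (α × β × μ) ℂ) : Prop :=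
  ∃ u : Matrix (α × μ) (α × μ) ℂ, ∀ a b m a' b' m',
    U (a, b, m) (a', b', m') = u (a, m) (a', m') * (if b = b' then 1 else 0)

/-- An operator on `H_A ⊗ H_B ⊗ H_M` acting as identity on `A`. -/
def ActsOnBM (U : Matrix (α × β × μ) (α × β × μ) ℂ) : Prop :=
  ∃ u : Matrix (β × μ) (β × μ) ℂ, ∀ a b m a' b' m',
    U (a, b, m) (a', b', m') = u (b, m) (b', m') * (if a = a' then 1 else 0)




def eA (u : Matrix (α × μ) (α × μ) ℂ) : Matrix (α × β × μ) (α × β × μ) ℂ :=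
  fun x y => u (x.1, x.2.2) (y.1, y.2.2) * (if x.2.1 = y.2.1 then 1 else 0)

def eB (v : Matrix (β × μ) (β × μ) ℂ) : Matrix (α × β × μ) (α × β × μ) ℂ :=
  fun x y => v x.2 y.2 * (if x.1 = y.1 then 1 else 0)

def lft {γ : Type*} [DecidableEq γ] (X : Matrix μ μ ℂ) : Matrix (γ × μ) (γ × μ) ℂ :=
  fun p q => (if p.1 = q.1 then 1 else 0) * X p.2 q.2

lemma eA_mul (u u' : Matrix (α × μ) (α × μ) ℂ) :
    eA (β := β) u * eA u' = eA (u * u') := by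
  ext ⟨a, b, m⟩ ⟨a', b', m'⟩
  simp [eA, Matrix.mul_apply, Fintype.sum_prod_type, mul_ite, ite_mul, mul_comm, mul_left_comm,
    Finset.mul_sum]

lemma eB_mul (v v' : Matrix (β × μ) (β × μ) ℂ) :
    eB (α := α) v * eB v' = eB (v * v') := by
  ext ⟨a, b, m⟩ ⟨a', b', m'⟩
  simp [eB, Matrix.mul_apply, Fintype.sum_prod_type, mul_ite, ite_mul, mul_comm, mul_left_comm,
    Finset.mul_sum]

lemma lft_mul {γ : Type*} [Fintype γ] [DecidableEq γ] (X Y : Matrix μ μ ℂ) :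
    lft (γ := γ) X * lft Y = lft (X * Y) := by
  ext ⟨g, m⟩ ⟨g', m'⟩
  simp [lft, Matrix.mul_apply, Fintype.sum_prod_type, mul_ite, ite_mul, mul_comm, mul_left_comm,
    Finset.mul_sum]

lemma eA_conjTranspose (u : Matrix (α × μ) (α × μ) ℂ) :
    (eA (β := β) u)ᴴ = eA uᴴ := by
  ext ⟨a, b, m⟩ ⟨a', b', m'⟩
  simp [eA, Matrix.conjTranspose_apply, eq_comm, apply_ite (starRingEnd ℂ)]

lemma eB_conjTranspose (v : Matrix (β × μ) (β × μ) ℂ) :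
    (eB (α := α) v)ᴴ = eB vᴴ := by
  ext ⟨a, b, m⟩ ⟨a', b', m'⟩
  simp [eB, Matrix.conjTranspose_apply, eq_comm, apply_ite (starRingEnd ℂ)]

lemma lft_conjTranspose {γ : Type*} [DecidableEq γ] (X : Matrix μ μ ℂ) :
    (lft (γ := γ) X)ᴴ = lft Xᴴ := by
  ext ⟨g, m⟩ ⟨g', m'⟩
  simp [lft, Matrix.conjTranspose_apply, eq_comm, apply_ite (starRingEnd ℂ)]

lemma eA_one : eA (β := β) (1 : Matrix (α × μ) (α × μ) ℂ) = 1 := by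
  ext ⟨a, b, m⟩ ⟨a', b', m'⟩
  by_cases h1 : a = a' <;> by_cases h2 : b = b' <;> by_cases h3 : m = m' <;>
    simp [eA, Matrix.one_apply, Prod.ext_iff, h1, h2, h3]

lemma eB_one : eB (α := α) (1 : Matrix (β × μ) (β × μ) ℂ) = 1 := by
  ext ⟨a, b, m⟩ ⟨a', b', m'⟩
  by_cases h1 : a = a' <;> by_cases h2 : b = b' <;> by_cases h3 : m = m' <;>
    simp [eB, Matrix.one_apply, Prod.ext_iff, h1, h2, h3]

lemma lft_one {γ : Type*} [DecidableEq γ] : lft (γ := γ) (1 : Matrix μ μ ℂ) = 1 := by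
  ext ⟨g, m⟩ ⟨g', m'⟩
  by_cases h1 : g = g' <;> by_cases h3 : m = m' <;>
    simp [lft, Matrix.one_apply, Prod.ext_iff, h1, h3]

lemma eA_smul (c : ℂ) (u : Matrix (α × μ) (α × μ) ℂ) :
    eA (β := β) (c • u) = c • eA u := by
  ext ⟨a, b, m⟩ ⟨a', b', m'⟩
  simp [eA, mul_assoc]

lemma eA_lft_eq_eB_lft (X : Matrix μ μ ℂ) :
    eA (β := β) (lft (γ := α) X) = eB (lft (γ := β) X) := by
  ext ⟨a, b, m⟩ ⟨a', b', m'⟩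
  by_cases h1 : a = a' <;> by_cases h2 : b = b' <;> simp [eA, eB, lft, h1, h2]


lemma eA_inj [Nonempty β] (u u' : Matrix (α × μ) (α × μ) ℂ)
    (h : eA (β := β) u = eA u') : u = u' := by
  obtain ⟨b₀⟩ := ‹Nonempty β›
  ext ⟨a, m⟩ ⟨a', m'⟩
  have := congr_fun (congr_fun h (a, b₀, m)) (a', b₀, m')
  simpa [eA] using this

lemma eB_inj [Nonempty α] (v v' : Matrix (β × μ) (β × μ) ℂ)
    (h : eB (α := α) v = eB v') : v = v' := by
  obtain ⟨a₀⟩ := ‹Nonempty α›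
  ext ⟨b, m⟩ ⟨b', m'⟩
  have := congr_fun (congr_fun h (a₀, b, m)) (a₀, b', m')
  simpa [eB] using this

lemma eA_sandwich (u : Matrix (α × μ) (α × μ) ℂ) (ρ : Matrix (α × β × μ) (α × β × μ) ℂ)
    (x y : α × β × μ) :
    (eA (β := β) u * ρ * (eA (β := β) u)ᴴ) x y
      = (u * Matrix.of (fun (p q : α × μ) => ρ (p.1, x.2.1, p.2) (q.1, y.2.1, q.2)) * uᴴ) (x.1, x.2.2) (y.1, y.2.2) := by
  obtain ⟨a, b, m⟩ := x
  obtain ⟨a', b', m'⟩ := y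
  simp only [Matrix.mul_apply, Matrix.conjTranspose_apply, eA, Fintype.sum_prod_type]
  simp [mul_ite, ite_mul, apply_ite (starRingEnd ℂ), Finset.sum_mul, Finset.mul_sum,
    mul_comm, mul_left_comm, mul_assoc]

lemma eB_sandwich (v : Matrix (β × μ) (β × μ) ℂ) (ρ : Matrix (α × β × μ) (α × β × μ) ℂ)
    (x y : α × β × μ) :
    (eB (α := α) v * ρ * (eB (α := α) v)ᴴ) x y
      = (v * Matrix.of (fun (p q : β × μ) => ρ (x.1, p) (y.1, q)) * vᴴ) x.2 y.2 := by
  obtain ⟨a, b, m⟩ := x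
  obtain ⟨a', b', m'⟩ := y
  simp only [Matrix.mul_apply, Matrix.conjTranspose_apply, eB, Fintype.sum_prod_type]
  simp [mul_ite, ite_mul, apply_ite (starRingEnd ℂ), Finset.sum_mul, Finset.mul_sum,
    mul_comm, mul_left_comm, mul_assoc]




section Generic
variable {n : Type*} [Fintype n] [DecidableEq n]

lemma outer_conj (X : Matrix n n ℂ) (w : n → ℂ) :
    X * vecMulVec w (star w) * Xᴴ = vecMulVec (X *ᵥ w) (star (X *ᵥ w)) := by
  ext i j
  simp only [Matrix.mul_apply, vecMulVec_apply, conjTranspose_apply, mulVec, dotProduct,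
    Pi.star_apply, star_sum, star_mul', star_star, Finset.sum_mul, Finset.mul_sum]
  refine Finset.sum_congr rfl fun k _ => Finset.sum_congr rfl fun l _ => by ring

lemma quad_outer (v z : n → ℂ) :
    star z ⬝ᵥ (vecMulVec v (star v) *ᵥ z) = ((Complex.normSq (star z ⬝ᵥ v) : ℝ) : ℂ) := by
  have h1 : vecMulVec v (star v) *ᵥ z = (star v ⬝ᵥ z) • v := by
    ext i
    simp [vecMulVec_apply, mulVec, dotProduct, Finset.mul_sum, mul_comm, mul_left_comm]
  rw [h1, dotProduct_smul]
  have h2 : star v ⬝ᵥ z = starRingEnd ℂ (star z ⬝ᵥ v) := by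
    simp [dotProduct, map_sum, mul_comm]
  rw [h2]
  rw [smul_eq_mul, mul_comm]
  rw [Complex.mul_conj]

lemma dot_self_eq_zero {z : n → ℂ} (h : star z ⬝ᵥ z = 0) : z = 0 := by
  have h2 : ∀ i, z i = 0 := by
    have hsum : ∑ i, Complex.normSq (z i) = 0 := by
      have : star z ⬝ᵥ z = ((∑ i, Complex.normSq (z i) : ℝ) : ℂ) := by
        simp [dotProduct, Complex.normSq_eq_conj_mul_self]
      rw [this] at h
      exact_mod_cast h
    intro i
    have := (Finset.sum_eq_zero_iff_of_nonneg (fun i _ => Complex.normSq_nonneg (z i))).mp hsum i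
      (Finset.mem_univ i)
    exact Complex.normSq_eq_zero.mp this
  funext i; exact h2 i

lemma sum_mulVec' {ι : Type*} [Fintype ι] (A : ι → Matrix n n ℂ) (z : n → ℂ) :
    (∑ t, A t) *ᵥ z = ∑ t, A t *ᵥ z := by
  ext i
  simp only [mulVec, dotProduct, Matrix.sum_apply, Finset.sum_apply, Finset.sum_mul]
  rw [Finset.sum_comm]

lemma dot_sum' {ι : Type*} [Fintype ι] (z : n → ℂ) (f : ι → (n → ℂ)) :
    star z ⬝ᵥ (∑ t, f t) = ∑ t, star z ⬝ᵥ f t := by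
  simp only [dotProduct, Finset.sum_apply, Finset.mul_sum]
  rw [Finset.sum_comm]

lemma orth_of_sum_outer {ι : Type*} [Fintype ι] (v : ι → (n → ℂ)) (u0 : n → ℂ)
    (h : ∑ t, vecMulVec (v t) (star (v t)) = vecMulVec u0 (star u0))
    (z : n → ℂ) (hz : star z ⬝ᵥ u0 = 0) (t : ι) : star z ⬝ᵥ v t = 0 := by
  have hq : ((∑ t, Complex.normSq (star z ⬝ᵥ v t) : ℝ) : ℂ)
      = ((Complex.normSq (star z ⬝ᵥ u0) : ℝ) : ℂ) := by
    rw [← quad_outer u0 z]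
    push_cast
    simp_rw [← quad_outer (n := n)]
    rw [← h, sum_mulVec', dot_sum']
  rw [hz] at hq
  simp only [map_zero] at hq
  have hsum : ∑ t, Complex.normSq (star z ⬝ᵥ v t) = 0 := by exact_mod_cast hq
  have := (Finset.sum_eq_zero_iff_of_nonneg (fun t _ => Complex.normSq_nonneg _)).mp hsum t
    (Finset.mem_univ t)
  exact Complex.normSq_eq_zero.mp this

lemma prop_of_sum_outer {ι : Type*} [Fintype ι] (v : ι → (n → ℂ)) (u0 : n → ℂ)
    (h : ∑ t, vecMulVec (v t) (star (v t)) = vecMulVec u0 (star u0)) (t : ι) :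
    ∃ c : ℂ, v t = c • u0 := by
  by_cases h0 : u0 = 0
  · refine ⟨0, ?_⟩
    have hz : star (v t) ⬝ᵥ u0 = 0 := by simp [h0]
    have := orth_of_sum_outer v u0 h (v t) hz t
    rw [dot_self_eq_zero this]
    simp
  · have hS : star u0 ⬝ᵥ u0 ≠ 0 := fun hc => h0 (dot_self_eq_zero hc)
    set d : ℂ := (star u0 ⬝ᵥ v t) / (star u0 ⬝ᵥ u0) with hd
    set z : n → ℂ := v t - d • u0 with hzdef
    have hconj : ∀ w : n → ℂ, star z ⬝ᵥ w = star (v t) ⬝ᵥ w - starRingEnd ℂ d * (star u0 ⬝ᵥ w) := by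
      intro w
      rw [hzdef, star_sub, star_smul, sub_dotProduct, smul_dotProduct]
      simp [smul_eq_mul, Complex.star_def]
    have hSconj : starRingEnd ℂ (star u0 ⬝ᵥ u0) = star u0 ⬝ᵥ u0 := by
      simp [dotProduct, map_sum, mul_comm, Complex.normSq_eq_conj_mul_self]
    have hswap : star (v t) ⬝ᵥ u0 = starRingEnd ℂ (star u0 ⬝ᵥ v t) := by
      simp [dotProduct, map_sum, mul_comm]
    have hzu : star z ⬝ᵥ u0 = 0 := by
      rw [hconj, hswap, hd]
      rw [map_div₀, hSconj]
      field_simp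
      ring
    have hzv : star z ⬝ᵥ v t = 0 := orth_of_sum_outer v u0 h z hzu t
    have hzz : star z ⬝ᵥ z = 0 := by
      rw [hzdef]
      rw [dotProduct_sub, hzv, dotProduct_smul, ← hzdef, hzu]
      simp
    have := dot_self_eq_zero hzz
    refine ⟨d, ?_⟩
    have h4 : v t - d • u0 = 0 := this
    have := sub_eq_zero.mp h4
    exact this

lemma scalar_of_eigen [Nonempty n] (T : Matrix n n ℂ)
    (h : ∀ v : n → ℂ, ∃ c : ℂ, T *ᵥ v = c • v) : ∃ c : ℂ, T = c • (1 : Matrix n n ℂ) := by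
  have hcol : ∀ k : n, ∃ c : ℂ, ∀ i, T i k = c * (if i = k then 1 else 0) := by
    intro k
    obtain ⟨c, hc⟩ := h (Pi.single k 1)
    refine ⟨c, fun i => ?_⟩
    have := congr_fun hc i
    simp only [mulVec_single_one, col_apply, Pi.smul_apply, smul_eq_mul, mul_one] at this
    rw [this]
    simp [Pi.single_apply]
  choose lam hlam using hcol
  obtain ⟨k₀⟩ := ‹Nonempty n›
  have hlameq : ∀ k, lam k = lam k₀ := by
    intro k
    by_cases hk : k = k₀
    · rw [hk]
    · obtain ⟨c, hc⟩ := h (Pi.single k 1 + Pi.single k₀ 1)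
      have h1 := congr_fun hc k
      have h2 := congr_fun hc k₀
      have hT : ∀ i j, T i j = lam j * (if i = j then 1 else 0) := fun i j => hlam j i
      simp only [mulVec_add, mulVec_single_one, col_apply, Pi.add_apply, Pi.smul_apply, smul_eq_mul,
        mul_one] at h1 h2
      rw [hT k k, hT k k₀] at h1
      rw [hT k₀ k, hT k₀ k₀] at h2
      simp [Pi.single_apply, hk, Ne.symm hk] at h1 h2
      rw [h1, h2]
  refine ⟨lam k₀, ?_⟩
  ext i j
  rw [hlam j i, hlameq j]
  simp [Matrix.one_apply]

lemma kraus_prop {ι : Type*} [Fintype ι] [Nonempty n] (M : ι → Matrix n n ℂ)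
    (U : Matrix n n ℂ) (hU : IsUnit U.det)
    (h : ∀ ρ : Matrix n n ℂ, ∑ t, M t * ρ * (M t)ᴴ = U * ρ * Uᴴ) (t : ι) :
    ∃ c : ℂ, M t = c • U := by
  have step1 : ∀ w : n → ℂ, ∃ c : ℂ, M t *ᵥ w = c • (U *ᵥ w) := by
    intro w
    have hw := h (vecMulVec w (star w))
    have hL : ∀ X : Matrix n n ℂ, X * vecMulVec w (star w) * Xᴴ
        = vecMulVec (X *ᵥ w) (star (X *ᵥ w)) := fun X => outer_conj X w
    rw [hL U] at hw
    simp_rw [hL] at hw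
    exact prop_of_sum_outer (fun s => M s *ᵥ w) (U *ᵥ w) hw t
  have step2 : ∀ v : n → ℂ, ∃ c : ℂ, (M t * U⁻¹) *ᵥ v = c • v := by
    intro v
    obtain ⟨c, hc⟩ := step1 (U⁻¹ *ᵥ v)
    refine ⟨c, ?_⟩
    have hUv : U *ᵥ (U⁻¹ *ᵥ v) = v := by
      rw [mulVec_mulVec, mul_nonsing_inv _ hU, one_mulVec]
    rw [← mulVec_mulVec, hc, hUv]
  obtain ⟨c, hc⟩ := scalar_of_eigen (M t * U⁻¹) step2
  refine ⟨c, ?_⟩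
  have : M t * U⁻¹ * U = M t := by
    rw [mul_assoc, nonsing_inv_mul _ hU, mul_one]
  rw [← this, hc, smul_mul, one_mul]


end Generic

section MoreHelpers
variable {α β μ : Type*} [Fintype α] [DecidableEq α] [Fintype β] [DecidableEq β]
  [Fintype μ] [DecidableEq μ]

lemma extAM_kraus {N : ℕ} (Λ : Matrix (α × μ) (α × μ) ℂ → Matrix (α × μ) (α × μ) ℂ)
    (K : Fin N → Matrix (α × μ) (α × μ) ℂ)
    (hΛ : ∀ σ, Λ σ = ∑ i, K i * σ * (K i)ᴴ) (ρ : Matrix (α × β × μ) (α × β × μ) ℂ) :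
    ExtAM (β := β) Λ ρ = ∑ i, eA (β := β) (K i) * ρ * (eA (β := β) (K i))ᴴ := by
  funext x y
  have h0 : ExtAM (β := β) Λ ρ x y
      = Λ (Matrix.of fun (p q : α × μ) => ρ (p.1, x.2.1, p.2) (q.1, y.2.1, q.2))
          (x.1, x.2.2) (y.1, y.2.2) := rfl
  rw [h0, hΛ, Matrix.sum_apply, Matrix.sum_apply]
  exact Finset.sum_congr rfl fun i _ => (eA_sandwich (K i) ρ x y).symm

lemma extBM_kraus {N : ℕ} (Λ : Matrix (β × μ) (β × μ) ℂ → Matrix (β × μ) (β × μ) ℂ)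
    (L : Fin N → Matrix (β × μ) (β × μ) ℂ)
    (hΛ : ∀ σ, Λ σ = ∑ i, L i * σ * (L i)ᴴ) (ρ : Matrix (α × β × μ) (α × β × μ) ℂ) :
    ExtBM (α := α) Λ ρ = ∑ i, eB (α := α) (L i) * ρ * (eB (α := α) (L i))ᴴ := by
  funext x y
  have h0 : ExtBM (α := α) Λ ρ x y
      = Λ (Matrix.of fun (p q : β × μ) => ρ (x.1, p) (y.1, q)) x.2 y.2 := rfl
  rw [h0, hΛ, Matrix.sum_apply, Matrix.sum_apply]
  exact Finset.sum_congr rfl fun i _ => (eB_sandwich (L i) ρ x y).symm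

def eqvA : α × β × μ ≃ (α × μ) × β where
  toFun x := ((x.1, x.2.2), x.2.1)
  invFun p := (p.1.1, p.2, p.1.2)
  left_inv := by rintro ⟨a, b, m⟩; rfl
  right_inv := by rintro ⟨⟨a, m⟩, b⟩; rfl

lemma eA_det (u : Matrix (α × μ) (α × μ) ℂ) :
    (eA (β := β) u).det = u.det ^ Fintype.card β := by
  have h0 : eA (β := β) u
      = (Matrix.kroneckerMap (· * ·) u (1 : Matrix β β ℂ)).submatrix eqvA eqvA := by
    ext ⟨a, b, m⟩ ⟨a', b', m'⟩
    simp [eA, Matrix.submatrix_apply, Matrix.kroneckerMap_apply, Matrix.one_apply, eqvA]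
  rw [h0, Matrix.det_submatrix_equiv_self]
  have := Matrix.det_kronecker u (1 : Matrix β β ℂ)
  simpa using this

lemma eB_det (v : Matrix (β × μ) (β × μ) ℂ) :
    (eB (α := α) v).det = v.det ^ Fintype.card α := by
  have h0 : eB (α := α) v = Matrix.kroneckerMap (· * ·) (1 : Matrix α α ℂ) v := by
    ext ⟨a, b, m⟩ ⟨a', b', m'⟩
    simp [eB, Matrix.kroneckerMap_apply, Matrix.one_apply, mul_comm]
  rw [h0]
  have := Matrix.det_kronecker (1 : Matrix α α ℂ) v
  simpa using this

lemma lft_det {γ : Type*} [Fintype γ] [DecidableEq γ] (X : Matrix μ μ ℂ) :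
    (lft (γ := γ) X).det = X.det ^ Fintype.card γ := by
  have h0 : lft (γ := γ) X = Matrix.kroneckerMap (· * ·) (1 : Matrix γ γ ℂ) X := by
    ext ⟨g, m⟩ ⟨g', m'⟩
    simp [lft, Matrix.kroneckerMap_apply, Matrix.one_apply]
  rw [h0]
  have := Matrix.det_kronecker (1 : Matrix γ γ ℂ) X
  simpa using this

lemma lft_quad {γ : Type*} [Fintype γ] [DecidableEq γ] (X : Matrix μ μ ℂ) (g₀ : γ)
    (x : μ → ℂ) :
    star (fun p : γ × μ => if p.1 = g₀ then x p.2 else 0) ⬝ᵥ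
        (lft (γ := γ) X *ᵥ fun p : γ × μ => if p.1 = g₀ then x p.2 else 0)
      = star x ⬝ᵥ (X *ᵥ x) := by
  simp [dotProduct, mulVec, lft, Fintype.sum_prod_type, ite_mul, mul_ite,
    Finset.mul_sum, apply_ite (starRingEnd ℂ)]

end MoreHelpers

section SqrtHelper
open scoped MatrixOrder

lemma exists_sqrt_herm {μ : Type*} [Fintype μ] [DecidableEq μ] (W : Matrix μ μ ℂ)
    (h : W.PosSemidef) : ∃ S : Matrix μ μ ℂ, S * S = W ∧ Sᴴ = S :=
  ⟨CFC.sqrt W, CFC.sqrt_mul_sqrt_self W h.nonneg, (CFC.sqrt_nonneg W).posSemidef.1.eq⟩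

end SqrtHelper

/-- A unitary `U` on `H_A ⊗ H_B ⊗ H_M` is decomposable as `U = U_{BM} U_{AM}`
(with `U_{AM}` identity on `B`, `U_{BM}` identity on `A`) iff the channel `ρ ↦ U ρ U†` is
a composition `Λ_{BM} ∘ Λ_{AM}` of CPTP maps acting trivially on `B` resp. `A`. -/
theorem unitary_decomposable_iff_channel_decomposable
    (U : Matrix (α × β × μ) (α × β × μ) ℂ)
    (hU : U ∈ Matrix.unitaryGroup (α × β × μ) ℂ) :
    (∃ UAM UBM : Matrix (α × β × μ) (α × β × μ) ℂ,
        UAM ∈ Matrix.unitaryGroup (α × β × μ) ℂ ∧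
        UBM ∈ Matrix.unitaryGroup (α × β × μ) ℂ ∧
        ActsOnAM UAM ∧ ActsOnBM UBM ∧ U = UBM * UAM) ↔
      (∃ (ΛAM : Matrix (α × μ) (α × μ) ℂ → Matrix (α × μ) (α × μ) ℂ)
          (ΛBM : Matrix (β × μ) (β × μ) ℂ → Matrix (β × μ) (β × μ) ℂ),
        IsCPTP ΛAM ∧ IsCPTP ΛBM ∧
        ∀ ρ : Matrix (α × β × μ) (α × β × μ) ℂ,
          ExtBM (β := β) ΛBM (ExtAM (β := β) ΛAM ρ) = U * ρ * Uᴴ) := by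
  rcases isEmpty_or_nonempty (α × β × μ) with hE | hNE
  · -- degenerate case: the tripartite space is empty
    have hsub : ∀ X Y : Matrix (α × β × μ) (α × β × μ) ℂ, X = Y := by
      intro X Y; funext x; exact isEmptyElim x
    constructor
    · intro _
      exact ⟨id, id, ⟨1, fun _ => 1, by simp, by simp⟩, ⟨1, fun _ => 1, by simp, by simp⟩,
        fun ρ => hsub _ _⟩
    · intro _
      refine ⟨1, 1, one_mem _, one_mem _, ⟨1, fun a b m a' b' m' => (hE.false (a, b, m)).elim⟩,
        ⟨1, fun a b m a' b' m' => (hE.false (a, b, m)).elim⟩, hsub _ _⟩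
  · obtain ⟨⟨a₀, b₀, m₀⟩⟩ := hNE
    haveI : Nonempty α := ⟨a₀⟩
    haveI : Nonempty β := ⟨b₀⟩
    haveI : Nonempty μ := ⟨m₀⟩
    have hU1 : U * Uᴴ = 1 := by
      have := (Matrix.mem_unitaryGroup_iff).mp hU
      simpa [Matrix.star_eq_conjTranspose] using this
    have hU1' : Uᴴ * U = 1 := by
      have := (Matrix.mem_unitaryGroup_iff').mp hU
      simpa [Matrix.star_eq_conjTranspose] using this
    have hUdet : IsUnit U.det := by
      apply IsUnit.of_mul_eq_one Uᴴ.det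
      rw [← Matrix.det_mul, hU1, Matrix.det_one]
    constructor
    · -- forward direction
      rintro ⟨UAM, UBM, hUAMu, hUBMu, ⟨u, hu⟩, ⟨v, hv⟩, hprod⟩
      have hUAM : UAM = eA (β := β) u := by
        ext ⟨a, b, m⟩ ⟨a', b', m'⟩; exact hu a b m a' b' m'
      have hUBM : UBM = eB (α := α) v := by
        ext ⟨a, b, m⟩ ⟨a', b', m'⟩; exact hv a b m a' b' m'
      have huu : uᴴ * u = 1 := by
        apply eA_inj (β := β)
        rw [← eA_mul, ← eA_conjTranspose, ← hUAM, eA_one]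
        have := (Matrix.mem_unitaryGroup_iff').mp hUAMu
        simpa [Matrix.star_eq_conjTranspose] using this
      have hvv : vᴴ * v = 1 := by
        apply eB_inj (α := α)
        rw [← eB_mul, ← eB_conjTranspose, ← hUBM, eB_one]
        have := (Matrix.mem_unitaryGroup_iff').mp hUBMu
        simpa [Matrix.star_eq_conjTranspose] using this
      refine ⟨fun σ => u * σ * uᴴ, fun σ => v * σ * vᴴ,
        ⟨1, fun _ => u, fun σ => by simp, by simp [huu]⟩,
        ⟨1, fun _ => v, fun σ => by simp, by simp [hvv]⟩, ?_⟩
      intro ρ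
      have hA : ExtAM (β := β) (fun σ => u * σ * uᴴ) ρ
          = eA (β := β) u * ρ * (eA (β := β) u)ᴴ := by
        have := extAM_kraus (β := β) (fun σ => u * σ * uᴴ) (fun _ : Fin 1 => u)
          (fun σ => by simp) ρ
        simpa using this
      have hB : ExtBM (α := α) (fun σ => v * σ * vᴴ) (eA (β := β) u * ρ * (eA (β := β) u)ᴴ)
          = eB (α := α) v * (eA (β := β) u * ρ * (eA (β := β) u)ᴴ) * (eB (α := α) v)ᴴ := by
        have := extBM_kraus (α := α) (fun σ => v * σ * vᴴ) (fun _ : Fin 1 => v)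
          (fun σ => by simp) (eA (β := β) u * ρ * (eA (β := β) u)ᴴ)
        simpa using this
      rw [hA, hB, hprod, hUAM, hUBM]
      simp only [Matrix.conjTranspose_mul, Matrix.mul_assoc]
    · -- reverse direction
      rintro ⟨ΛAM, ΛBM, ⟨N₁, K, hK, hK1⟩, ⟨N₂, L, hL, hL1⟩, hch⟩
      have hsum : ∀ ρ : Matrix (α × β × μ) (α × β × μ) ℂ,
          ∑ t : Fin N₂ × Fin N₁, (eB (α := α) (L t.1) * eA (β := β) (K t.2)) * ρ *
            ((eB (α := α) (L t.1) * eA (β := β) (K t.2)))ᴴ = U * ρ * Uᴴ := by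
        intro ρ
        have h1 := extAM_kraus (β := β) ΛAM K hK ρ
        have h2 := extBM_kraus (α := α) ΛBM L hL (ExtAM (β := β) ΛAM ρ)
        rw [← hch ρ, h2, h1, Fintype.sum_prod_type]
        refine Finset.sum_congr rfl fun j _ => ?_
        rw [Finset.mul_sum, Finset.sum_mul]
        refine Finset.sum_congr rfl fun i _ => ?_
        simp only [Matrix.conjTranspose_mul, Matrix.mul_assoc]
      have hprop := kraus_prop
        (fun t : Fin N₂ × Fin N₁ => eB (α := α) (L t.1) * eA (β := β) (K t.2)) U hUdet hsum
      choose cf hcf using hprop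
      have hex : ∃ t : Fin N₂ × Fin N₁, cf t ≠ 0 := by
        by_contra hno
        push_neg at hno
        have h0 := hsum 1
        rw [Matrix.mul_one, hU1] at h0
        have hcf' : ∀ t : Fin N₂ × Fin N₁,
            eB (α := α) (L t.1) * eA (β := β) (K t.2) = cf t • U := fun t => hcf t
        rw [Finset.sum_eq_zero (fun t _ => by rw [hcf' t, hno t, zero_smul]; simp)] at h0
        have := congr_fun (congr_fun h0 (a₀, b₀, m₀)) (a₀, b₀, m₀)
        simp [Matrix.one_apply] at this
      obtain ⟨⟨j₀, i₀⟩, hc0⟩ := hex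
      set c : ℂ := cf (j₀, i₀) with hcdef
      set K₀ : Matrix (α × μ) (α × μ) ℂ := K i₀ with hK₀def
      set L₀ : Matrix (β × μ) (β × μ) ℂ := L j₀ with hL₀def
      have hcU : eB (α := α) L₀ * eA (β := β) K₀ = c • U := hcf (j₀, i₀)
      -- invertibility of K₀ and L₀
      have hdetKL : (eB (α := α) L₀).det * (eA (β := β) K₀).det ≠ 0 := by
        rw [← Matrix.det_mul, hcU, Matrix.det_smul]
        exact mul_ne_zero (pow_ne_zero _ hc0) hUdet.ne_zero
      have hdetK : K₀.det ≠ 0 := by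
        intro h0
        exact hdetKL (by rw [eA_det, h0, zero_pow Fintype.card_ne_zero, mul_zero])
      have hdetL : L₀.det ≠ 0 := by
        intro h0
        exact hdetKL (by rw [eB_det, h0, zero_pow Fintype.card_ne_zero, zero_mul])
      have hKu : IsUnit K₀.det := isUnit_iff_ne_zero.mpr hdetK
      have hKHu : IsUnit K₀ᴴ.det := by rw [Matrix.det_conjTranspose]; exact hKu.star
      set r : ℂ := starRingEnd ℂ c * c with hr
      have hrne : r ≠ 0 := mul_ne_zero (by simpa using hc0) hc0
      set G : Matrix (β × μ) (β × μ) ℂ := L₀ᴴ * L₀ with hGdef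
      set Hm : Matrix (α × μ) (α × μ) ℂ := r • ((K₀ᴴ)⁻¹ * K₀⁻¹) with hHmdef
      have hG : (eA (β := β) K₀)ᴴ * eB (α := α) G * eA (β := β) K₀ = r • 1 := by
        have h1 : (eB (α := α) L₀ * eA (β := β) K₀)ᴴ * (eB (α := α) L₀ * eA (β := β) K₀)
            = (c • U)ᴴ * (c • U) := by rw [hcU]
        rw [Matrix.conjTranspose_mul, Matrix.conjTranspose_smul] at h1
        calc (eA (β := β) K₀)ᴴ * eB (α := α) G * eA (β := β) K₀
            = (eA (β := β) K₀)ᴴ * (eB (α := α) L₀)ᴴ * (eB (α := α) L₀ * eA (β := β) K₀) := by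
              rw [hGdef, ← eB_mul, ← eB_conjTranspose]
              simp only [Matrix.mul_assoc]
          _ = (starRingEnd ℂ c • Uᴴ) * (c • U) := h1
          _ = r • 1 := by
              rw [Matrix.smul_mul, Matrix.mul_smul, hU1', smul_smul, hr]
      have heBG : eB (α := α) G = eA (β := β) Hm := by
        have hQ : eA (β := β) ((K₀ᴴ)⁻¹) * (eA (β := β) K₀)ᴴ = 1 := by
          rw [eA_conjTranspose, eA_mul, Matrix.nonsing_inv_mul _ hKHu, eA_one]
        have hP : eA (β := β) K₀ * eA (β := β) (K₀⁻¹) = 1 := by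
          rw [eA_mul, Matrix.mul_nonsing_inv _ hKu, eA_one]
        have := congrArg (fun X => eA (β := β) ((K₀ᴴ)⁻¹) * X * eA (β := β) (K₀⁻¹)) hG
        calc eB (α := α) G
            = eA (β := β) ((K₀ᴴ)⁻¹) * (eA (β := β) K₀)ᴴ * eB (α := α) G
                * (eA (β := β) K₀ * eA (β := β) (K₀⁻¹)) := by
              rw [hQ, hP, Matrix.one_mul, Matrix.mul_one]
          _ = eA (β := β) ((K₀ᴴ)⁻¹) * ((eA (β := β) K₀)ᴴ * eB (α := α) G * eA (β := β) K₀)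
                * eA (β := β) (K₀⁻¹) := by simp only [Matrix.mul_assoc]
          _ = eA (β := β) ((K₀ᴴ)⁻¹) * (r • (1 : Matrix (α × β × μ) (α × β × μ) ℂ))
                * eA (β := β) (K₀⁻¹) := by rw [hG]
          _ = r • (eA (β := β) ((K₀ᴴ)⁻¹) * eA (β := β) (K₀⁻¹)) := by
              rw [Matrix.mul_smul, Matrix.mul_one, Matrix.smul_mul]
          _ = eA (β := β) Hm := by rw [eA_mul, hHmdef, eA_smul]
      have hent : ∀ a b m a' b' m',
          G (b, m) (b', m') * (if a = a' then 1 else 0)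
            = Hm (a, m) (a', m') * (if b = b' then 1 else 0) := by
        intro a b m a' b' m'
        have := congr_fun (congr_fun heBG (a, b, m)) (a', b', m')
        simpa [eA, eB] using this
      set W : Matrix μ μ ℂ := fun m m' => Hm (a₀, m) (a₀, m') with hWdef
      have hWHm : ∀ m m', W m m' = Hm (a₀, m) (a₀, m') := fun m m' => rfl
      have hGW : G = lft (γ := β) W := by
        ext ⟨b, m⟩ ⟨b', m'⟩
        have h1 := hent a₀ b m a₀ b' m'
        simp only [eq_self_iff_true, if_true, mul_one] at h1
        show G (b, m) (b', m') = (if b = b' then 1 else 0) * W m m'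
        rcases eq_or_ne b b' with hb | hb
        · rw [h1, if_pos hb, mul_one, one_mul, hWHm]
        · rw [h1, if_neg hb, mul_zero, zero_mul]
      have hHW : Hm = lft (γ := α) W := by
        ext ⟨a, m⟩ ⟨a', m'⟩
        have h1 := hent a b₀ m a' b₀ m'
        simp only [eq_self_iff_true, if_true, mul_one] at h1
        show Hm (a, m) (a', m') = (if a = a' then 1 else 0) * W m m'
        have h2 := hent a₀ b₀ m a₀ b₀ m'
        simp only [eq_self_iff_true, if_true, mul_one] at h2
        rw [← h1, hWHm, ← h2]
        ring
      have hWG : ∀ m m', W m m' = G (b₀, m) (b₀, m') := by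
        intro m m'
        have := congr_fun (congr_fun hGW (b₀, m)) (b₀, m')
        simp [lft] at this
        exact this.symm
      have hWherm : W.IsHermitian := by
        have hGherm : G.IsHermitian := (Matrix.posSemidef_conjTranspose_mul_self L₀).1
        ext m m'
        rw [Matrix.conjTranspose_apply, hWG, hWG]
        calc star (G (b₀, m') (b₀, m)) = Gᴴ (b₀, m) (b₀, m') := by
              rw [Matrix.conjTranspose_apply]
          _ = G (b₀, m) (b₀, m') := by rw [hGherm.eq]
      have hWpsd : W.PosSemidef := by
        refine Matrix.PosSemidef.of_dotProduct_mulVec_nonneg hWherm fun x => ?_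
        have hGpsd : G.PosSemidef := Matrix.posSemidef_conjTranspose_mul_self L₀
        have hq := lft_quad (γ := β) W b₀ x
        rw [← hq, ← hGW]
        exact hGpsd.dotProduct_mulVec_nonneg _
      have hWdet : IsUnit W.det := by
        rw [isUnit_iff_ne_zero]
        intro h0
        have hHmdet : Hm.det ≠ 0 := by
          rw [hHmdef, Matrix.det_smul, Matrix.det_mul, Matrix.det_nonsing_inv,
            Matrix.det_nonsing_inv, Ring.inverse_eq_inv, Ring.inverse_eq_inv]
          refine mul_ne_zero (pow_ne_zero _ hrne)
            (mul_ne_zero (inv_ne_zero ?_) (inv_ne_zero hdetK))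
          rw [Matrix.det_conjTranspose]
          simpa using hdetK
        rw [hHW, lft_det, h0, zero_pow Fintype.card_ne_zero] at hHmdet
        exact hHmdet rfl
      -- square root of W
      obtain ⟨S, hSS, hSherm⟩ := exists_sqrt_herm W hWpsd
      have hSdet : IsUnit S.det := by
        rw [isUnit_iff_ne_zero]
        intro h0
        apply hWdet.ne_zero
        rw [← hSS, Matrix.det_mul, h0, mul_zero]
      have hlftWdet : IsUnit (lft (γ := α) W).det := by
        rw [lft_det]; exact hWdet.pow _
      have hlftWinv : (lft (γ := α) W)⁻¹ = lft (γ := α) W⁻¹ := by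
        apply Matrix.inv_eq_right_inv
        rw [lft_mul, Matrix.mul_nonsing_inv _ hWdet, lft_one]
      have hXW : lft (γ := α) W * (K₀ * K₀ᴴ) = r • 1 := by
        rw [← hHW, hHmdef, Matrix.smul_mul]
        congr 1
        calc (K₀ᴴ)⁻¹ * K₀⁻¹ * (K₀ * K₀ᴴ) = (K₀ᴴ)⁻¹ * (K₀⁻¹ * K₀) * K₀ᴴ := by
              simp only [Matrix.mul_assoc]
          _ = 1 := by
              rw [Matrix.nonsing_inv_mul _ hKu, Matrix.mul_one, Matrix.nonsing_inv_mul _ hKHu]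
      have hKKH : K₀ * K₀ᴴ = r • lft (γ := α) W⁻¹ := by
        calc K₀ * K₀ᴴ = (lft (γ := α) W)⁻¹ * (lft (γ := α) W * (K₀ * K₀ᴴ)) := by
              rw [← Matrix.mul_assoc, Matrix.nonsing_inv_mul _ hlftWdet, Matrix.one_mul]
          _ = (lft (γ := α) W)⁻¹ * (r • 1) := by rw [hXW]
          _ = r • lft (γ := α) W⁻¹ := by rw [Matrix.mul_smul, Matrix.mul_one, hlftWinv]
      have hWinv : S * W⁻¹ * S = 1 := by
        have hWinv' : W⁻¹ = S⁻¹ * S⁻¹ := by rw [← hSS, Matrix.mul_inv_rev]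
        calc S * W⁻¹ * S = (S * S⁻¹) * (S⁻¹ * S) := by
              rw [hWinv']; simp only [Matrix.mul_assoc]
          _ = 1 := by
              rw [Matrix.mul_nonsing_inv _ hSdet, Matrix.nonsing_inv_mul _ hSdet, Matrix.one_mul]
      set K' : Matrix (α × μ) (α × μ) ℂ := c⁻¹ • (lft (γ := α) S * K₀) with hK'def
      set L' : Matrix (β × μ) (β × μ) ℂ := L₀ * lft (γ := β) S⁻¹ with hL'def
      have hSinvherm : (S⁻¹)ᴴ = S⁻¹ := by rw [Matrix.conjTranspose_nonsing_inv, hSherm]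
      have hK'K' : K' * K'ᴴ = 1 := by
        rw [hK'def, Matrix.conjTranspose_smul, Matrix.conjTranspose_mul, lft_conjTranspose,
          hSherm, Matrix.smul_mul, Matrix.mul_smul, smul_smul]
        have hmid : lft (γ := α) S * K₀ * (K₀ᴴ * lft (γ := α) S) = r • 1 := by
          calc lft (γ := α) S * K₀ * (K₀ᴴ * lft (γ := α) S)
              = lft (γ := α) S * (K₀ * K₀ᴴ) * lft (γ := α) S := by simp only [Matrix.mul_assoc]
            _ = lft (γ := α) S * (r • lft (γ := α) W⁻¹) * lft (γ := α) S := by rw [hKKH]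
            _ = r • lft (γ := α) (S * W⁻¹ * S) := by
                rw [Matrix.mul_smul, Matrix.smul_mul, lft_mul, lft_mul]
            _ = r • (1 : Matrix (α × μ) (α × μ) ℂ) := by rw [hWinv, lft_one]
        rw [hmid, smul_smul]
        have hsc : c⁻¹ * star c⁻¹ * r = 1 := by
          rw [hr]
          simp only [Complex.star_def, map_inv₀]
          field_simp
          exact div_self (by simpa using hc0)
        rw [hsc, one_smul]
      have hK'K'' : K'ᴴ * K' = 1 := mul_eq_one_comm.mp hK'K'
      have hL'L' : L'ᴴ * L' = 1 := by
        rw [hL'def, Matrix.conjTranspose_mul, lft_conjTranspose, hSinvherm]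
        calc lft (γ := β) S⁻¹ * L₀ᴴ * (L₀ * lft (γ := β) S⁻¹)
            = lft (γ := β) S⁻¹ * G * lft (γ := β) S⁻¹ := by
              rw [hGdef]; simp only [Matrix.mul_assoc]
          _ = lft (γ := β) (S⁻¹ * W * S⁻¹) := by rw [hGW, lft_mul, lft_mul]
          _ = 1 := by
              have h1 : S⁻¹ * W * S⁻¹ = 1 := by
                calc S⁻¹ * W * S⁻¹ = (S⁻¹ * S) * (S * S⁻¹) := by
                      rw [← hSS]; simp only [Matrix.mul_assoc]
                  _ = 1 := by
                      rw [Matrix.nonsing_inv_mul _ hSdet, Matrix.mul_nonsing_inv _ hSdet,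
                        Matrix.one_mul]
              rw [h1, lft_one]
      refine ⟨eA (β := β) K', eB (α := α) L', ?_, ?_, ⟨K', fun a b m a' b' m' => rfl⟩,
        ⟨L', fun a b m a' b' m' => rfl⟩, ?_⟩
      · rw [Matrix.mem_unitaryGroup_iff', Matrix.star_eq_conjTranspose, eA_conjTranspose,
          eA_mul, hK'K'', eA_one]
      · rw [Matrix.mem_unitaryGroup_iff', Matrix.star_eq_conjTranspose, eB_conjTranspose,
          eB_mul, hL'L', eB_one]
      · have hmid2 : eB (α := α) (lft (γ := β) S⁻¹) * eA (β := β) (lft (γ := α) S) = 1 := by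
          rw [← eA_lft_eq_eB_lft, eA_mul, lft_mul, Matrix.nonsing_inv_mul _ hSdet, lft_one,
            eA_one]
        calc U = c⁻¹ • (c • U) := by rw [smul_smul, inv_mul_cancel₀ hc0, one_smul]
          _ = c⁻¹ • (eB (α := α) L₀ * eA (β := β) K₀) := by rw [hcU]
          _ = c⁻¹ • (eB (α := α) L₀ *
                (eB (α := α) (lft (γ := β) S⁻¹) * eA (β := β) (lft (γ := α) S)) *
                eA (β := β) K₀) := by
              rw [hmid2, Matrix.mul_one]
          _ = eB (α := α) L' * eA (β := β) K' := by
              rw [hL'def, hK'def, ← eB_mul, eA_smul, ← eA_mul, Matrix.mul_smul]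
              congr 1
              simp only [Matrix.mul_assoc]

end Stmt7
end

section
/- If a CPTP map Λ_1 on a finite-dimensional system has a CPTP inverse Λ_2 (i.e. Λ_2 ∘ Λ_1 = id), then Λ_1 is a unitary conjugation: there exists a unitary U with Λ_1(ρ) = U ρ U† for all ρ. -/
open Matrix
open scoped ComplexOrder

namespace Stmt8

/-- A density matrix: positive semidefinite with unit trace. -/
def IsDensity {ι : Type*} [Fintype ι] (ρ : Matrix ι ι ℂ) : Prop :=
  ρ.PosSemidef ∧ ρ.trace = 1

/-- A completely positive trace-preserving map, presented by a Kraus decomposition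
(equivalent to CPTP in finite dimensions). -/
def IsCPTP {ι κ : Type*} [Fintype ι] [DecidableEq ι] [Fintype κ] [DecidableEq κ]
    (Φ : Matrix ι ι ℂ → Matrix κ κ ℂ) : Prop :=
  ∃ (N : ℕ) (K : Fin N → Matrix κ ι ℂ),
    (∀ ρ, Φ ρ = ∑ i, K i * ρ * (K i)ᴴ) ∧ ∑ i, (K i)ᴴ * K i = 1

section Aux

set_option linter.unusedSectionVars false

variable {ι : Type*} [Fintype ι] [DecidableEq ι]

theorem star_ite {c : Prop} [Decidable c] (a b : ℂ) : star (if c then a else b) = if c then star a else star b := apply_ite star c a b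

lemma kraus_id_entry {α : Type*} [Fintype α] (M : α → Matrix ι ι ℂ)
    (h : ∀ X : Matrix ι ι ℂ, ∑ a, M a * X * (M a)ᴴ = X) (p q r s : ι) :
    ∑ a, M a p r * (starRingEnd ℂ) (M a q s)
      = (if p = r then 1 else 0) * (if q = s then 1 else 0) := by
  have h1 := congrFun (congrFun (h (Matrix.single r s 1)) p) q
  simp only [Matrix.sum_apply, Matrix.mul_apply, conjTranspose_apply,
    Matrix.single, Matrix.of_apply, ite_and, Finset.sum_ite_eq, Finset.mem_univ,
    if_true, mul_ite, ite_mul, one_mul, mul_one, zero_mul, mul_zero,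
    Finset.sum_ite_eq', star_ite, map_zero, Finset.mul_sum, Finset.sum_mul] at h1
  simp only [starRingEnd_apply]
  rw [h1]
  by_cases hpr : p = r <;> by_cases hqs : q = s <;> simp [hpr, hqs, eq_comm]



lemma sum_normSq_eq_zero {α : Type*} [Fintype α] (f : α → ℂ)
    (h : ∑ a, f a * (starRingEnd ℂ) (f a) = 0) : ∀ a, f a = 0 := by
  have h2 : ∑ a, Complex.normSq (f a) = 0 := by
    have : ((∑ a, Complex.normSq (f a) : ℝ) : ℂ) = 0 := by
      push_cast
      rw [← h]
      exact Finset.sum_congr rfl fun a _ => (Complex.mul_conj (f a)).symm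
    exact_mod_cast this
  intro a
  have := (Finset.sum_eq_zero_iff_of_nonneg (fun i _ => Complex.normSq_nonneg (f i))).mp h2 a (Finset.mem_univ a)
  exact Complex.normSq_eq_zero.mp this

lemma kraus_id_scalar {α : Type*} [Fintype α] [Nonempty ι] (M : α → Matrix ι ι ℂ)
    (h : ∀ X : Matrix ι ι ℂ, ∑ a, M a * X * (M a)ᴴ = X) (p₀ : ι) :
    ∀ a, M a = (M a p₀ p₀) • (1 : Matrix ι ι ℂ) := by
  have offdiag : ∀ a (p r : ι), p ≠ r → M a p r = 0 := by
    intro a p r hpr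
    refine sum_normSq_eq_zero (fun a => M a p r) ?_ a
    rw [kraus_id_entry M h p p r r]
    simp [hpr]
  have diag : ∀ a (p q : ι), M a p p = M a q q := by
    intro a p q
    have key : ∑ b, (M b p p - M b q q) * (starRingEnd ℂ) (M b p p - M b q q) = 0 := by
      have e1 := kraus_id_entry M h p p p p
      have e2 := kraus_id_entry M h p q p q
      have e3 := kraus_id_entry M h q p q p
      have e4 := kraus_id_entry M h q q q q
      simp only [eq_self_iff_true, if_true, one_mul] at e1 e2 e3 e4
      have expand : ∑ b, (M b p p - M b q q) * (starRingEnd ℂ) (M b p p - M b q q)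
          = (∑ b, M b p p * (starRingEnd ℂ) (M b p p)) - (∑ b, M b p p * (starRingEnd ℂ) (M b q q))
            - (∑ b, M b q q * (starRingEnd ℂ) (M b p p)) + ∑ b, M b q q * (starRingEnd ℂ) (M b q q) := by
        rw [← Finset.sum_sub_distrib, ← Finset.sum_sub_distrib, ← Finset.sum_add_distrib]
        refine Finset.sum_congr rfl fun b _ => by rw [map_sub]; ring
      rw [expand, e1, e2, e3, e4]; ring
    have := sum_normSq_eq_zero _ key a
    exact sub_eq_zero.mp this
  intro a
  ext p q
  by_cases hpq : p = q
  · subst hpq; simp [Matrix.one_apply, diag a p p₀]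
  · simp [Matrix.one_apply, hpq, offdiag a p q hpq]


lemma posSemidef_vecMulVec_star (v : ι → ℂ) : (vecMulVec v (star v)).PosSemidef := by
  rw [posSemidef_iff_dotProduct_mulVec]
  constructor
  · ext i j
    simp [vecMulVec_apply, conjTranspose_apply, mul_comm]
  · intro x
    have : dotProduct (star x) (vecMulVec v (star v) *ᵥ x)
        = (dotProduct (star x) v) * star (dotProduct (star x) v) := by
      rw [← star_dotProduct]
      simp only [star_star, dotProduct, mulVec, vecMulVec_apply, Finset.sum_mul,
        Finset.mul_sum, Pi.star_apply]
      rw [Finset.sum_comm]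
      refine Finset.sum_congr rfl fun i _ => Finset.sum_congr rfl fun j _ => by ring
    rw [this]
    exact mul_star_self_nonneg _

lemma trace_vecMulVec_star (v : ι → ℂ) :
    (vecMulVec v (star v)).trace = ((∑ i, Complex.normSq (v i) : ℝ) : ℂ) := by
  simp only [trace, diag, vecMulVec_apply, Pi.star_apply]
  push_cast
  exact Finset.sum_congr rfl fun i _ => (Complex.mul_conj (v i))

lemma kraus_eq_id_of_density {α : Type*} [Fintype α] [Nonempty ι] (M : α → Matrix ι ι ℂ)
    (h : ∀ ρ : Matrix ι ι ℂ, IsDensity ρ → ∑ a, M a * ρ * (M a)ᴴ = ρ) :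
    ∀ X : Matrix ι ι ℂ, ∑ a, M a * X * (M a)ᴴ = X := by
  set T : Matrix ι ι ℂ →ₗ[ℂ] Matrix ι ι ℂ :=
    { toFun := fun X => (∑ a, M a * X * (M a)ᴴ) - X
      map_add' := fun X Y => by
        simp only [Matrix.mul_add, Matrix.add_mul, Finset.sum_add_distrib]
        abel
      map_smul' := fun c X => by
        simp only [RingHom.id_apply, smul_sub, Finset.smul_sum, Matrix.mul_smul,
          Matrix.smul_mul] } with hT
  suffices hsuff : ∀ X, T X = 0 by
    intro X
    have := hsuff X
    simpa [hT, sub_eq_zero] using this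
  -- step 1: rank-one self-adjoint
  have hr1 : ∀ v : ι → ℂ, T (vecMulVec v (star v)) = 0 := by
    intro v
    by_cases hv : v = 0
    · subst hv
      have : vecMulVec (0 : ι → ℂ) (star (0 : ι → ℂ)) = 0 := by
        ext i j; simp [vecMulVec_apply]
      rw [this, map_zero]
    · set c : ℝ := ∑ i, Complex.normSq (v i) with hc
      have hcpos : 0 < c := by
        have : ∃ i, v i ≠ 0 := by
          by_contra hcon
          push_neg at hcon
          exact hv (funext hcon)
        obtain ⟨i, hi⟩ := this
        refine Finset.sum_pos' (fun j _ => Complex.normSq_nonneg _) ⟨i, Finset.mem_univ i, ?_⟩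
        exact Complex.normSq_pos.mpr hi
      have hden : IsDensity (((c : ℂ)⁻¹) • vecMulVec v (star v)) := by
        obtain ⟨hherm, hform⟩ := posSemidef_iff_dotProduct_mulVec.mp (posSemidef_vecMulVec_star v)
        refine ⟨posSemidef_iff_dotProduct_mulVec.mpr ⟨?_, ?_⟩, ?_⟩
        · show ((c:ℂ)⁻¹ • vecMulVec v (star v))ᴴ = _
          rw [conjTranspose_smul, hherm.eq]
          congr 1
          simp [Complex.ext_iff]
        · intro x
          rw [smul_mulVec, dotProduct_smul]
          refine mul_nonneg ?_ (hform x)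
          rw [Complex.le_def]
          constructor
          · simpa using le_of_lt (inv_pos.mpr hcpos)
          · simp
        · rw [trace_smul, trace_vecMulVec_star, ← hc, smul_eq_mul]
          rw [inv_mul_cancel₀]
          exact_mod_cast ne_of_gt hcpos
      have h0 := h _ hden
      have hT0 : T (((c : ℂ)⁻¹) • vecMulVec v (star v)) = 0 := by
        show (∑ a, M a * (((c : ℂ)⁻¹) • vecMulVec v (star v)) * (M a)ᴴ)
            - (((c : ℂ)⁻¹) • vecMulVec v (star v)) = 0
        rw [sub_eq_zero]
        exact h0
      have hrw : vecMulVec v (star v) = (c : ℂ) • (((c : ℂ)⁻¹) • vecMulVec v (star v)) := by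
        rw [smul_smul, mul_inv_cancel₀ (by exact_mod_cast ne_of_gt hcpos), one_smul]
      rw [hrw, LinearMap.map_smul, hT0, smul_zero]
  -- step 2: polarization
  have hr2 : ∀ x y : ι → ℂ, T (vecMulVec x (star y)) = 0 := by
    intro x y
    have expand1 : vecMulVec (x + y) (star (x + y))
        = vecMulVec x (star x) + vecMulVec x (star y)
          + vecMulVec y (star x) + vecMulVec y (star y) := by
      ext i j
      simp only [vecMulVec_apply, Pi.star_apply, Pi.add_apply, Matrix.add_apply, star_add]
      ring
    have expand2 : vecMulVec (x + Complex.I • y) (star (x + Complex.I • y))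
        = vecMulVec x (star x) + (-Complex.I) • vecMulVec x (star y)
          + Complex.I • vecMulVec y (star x) + vecMulVec y (star y) := by
      ext i j
      simp only [vecMulVec_apply, Pi.star_apply, Pi.add_apply, Matrix.add_apply,
        Matrix.smul_apply, Pi.smul_apply, smul_eq_mul, star_add, star_mul',
        Complex.star_def, Complex.conj_I]
      ring_nf
      simp only [Complex.I_sq]
      ring
    have e1 := hr1 (x + y)
    rw [expand1, map_add, map_add, map_add, hr1 x, hr1 y, zero_add, add_zero] at e1
    have e2 := hr1 (x + Complex.I • y)
    rw [expand2, map_add, map_add, map_add, LinearMap.map_smul, LinearMap.map_smul, hr1 x, hr1 y,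
      zero_add, add_zero] at e2
    set A := T (vecMulVec x (star y)) with hA
    set B := T (vecMulVec y (star x)) with hB
    have hBA : B = -A := eq_neg_of_add_eq_zero_right e1
    rw [hBA, smul_neg, neg_smul, ← neg_add] at e2
    have h2 : Complex.I • A + Complex.I • A = 0 := neg_eq_zero.mp e2
    have h3 : ((2 : ℂ) * Complex.I) • A = 0 := by
      rw [mul_smul, two_smul]; exact h2
    rcases smul_eq_zero.mp h3 with h' | h'
    · exact absurd h' (mul_ne_zero two_ne_zero Complex.I_ne_zero)
    · exact h'
  -- step 3: std basis decomposition
  intro X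
  have hstd : ∀ (p q : ι) (c : ℂ), Matrix.single p q c
      = c • vecMulVec (Pi.single p 1) (star (Pi.single q (1:ℂ))) := by
    intro p q c
    ext i j
    by_cases h1 : p = i <;> by_cases h2 : q = j <;>
      simp [Matrix.single, vecMulVec_apply, Pi.single_apply, h1, h2]
  rw [matrix_eq_sum_single X, map_sum]
  refine Finset.sum_eq_zero fun p _ => ?_
  rw [map_sum]
  refine Finset.sum_eq_zero fun q _ => ?_
  rw [hstd, LinearMap.map_smul, hr2, smul_zero]


end Aux

set_option maxHeartbeats 1000000 in
/-- If a CPTP map `Λ₁` on a finite-dimensional system has a CPTP inverse `Λ₂`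
(i.e. `Λ₂ ∘ Λ₁ = id` on density matrices), then `Λ₁` is a unitary conjugation. -/
theorem cptp_inverse_implies_unitary {ι : Type*} [Fintype ι] [DecidableEq ι]
    (Λ₁ Λ₂ : Matrix ι ι ℂ → Matrix ι ι ℂ)
    (hΛ₁ : IsCPTP Λ₁) (hΛ₂ : IsCPTP Λ₂)
    (hinv : ∀ ρ : Matrix ι ι ℂ, IsDensity ρ → Λ₂ (Λ₁ ρ) = ρ) :
    ∃ U : Matrix ι ι ℂ, U ∈ Matrix.unitaryGroup ι ℂ ∧
      ∀ ρ : Matrix ι ι ℂ, IsDensity ρ → Λ₁ ρ = U * ρ * Uᴴ := by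
  obtain ⟨N₁, K, hK, hK1⟩ := hΛ₁
  obtain ⟨N₂, L, hL, hL1⟩ := hΛ₂
  rcases isEmpty_or_nonempty ι with hemp | hne
  · exact ⟨1, Submonoid.one_mem _, fun ρ _ => by ext i j; exact isEmptyElim i⟩
  · set p₀ : ι := Classical.arbitrary ι with hp₀
    set M : Fin N₂ × Fin N₁ → Matrix ι ι ℂ := fun a => L a.1 * K a.2 with hM
    have hcomp : ∀ ρ : Matrix ι ι ℂ, IsDensity ρ → ∑ a, M a * ρ * (M a)ᴴ = ρ := by
      intro ρ hρ
      conv_rhs => rw [← hinv ρ hρ, hL, hK]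
      rw [Fintype.sum_prod_type]
      refine Finset.sum_congr rfl fun j _ => ?_
      rw [Finset.mul_sum, Finset.sum_mul]
      refine Finset.sum_congr rfl fun i _ => ?_
      simp only [hM, conjTranspose_mul, mul_assoc]
    have hall := kraus_eq_id_of_density M hcomp
    have hscal := kraus_id_scalar M hall p₀
    set c : Fin N₂ × Fin N₁ → ℂ := fun a => M a p₀ p₀ with hc
    have hd : ∀ j i : Fin N₁, (K j)ᴴ * K i
        = (∑ a : Fin N₂, (starRingEnd ℂ) (c (a, j)) * c (a, i)) • (1 : Matrix ι ι ℂ) := by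
      intro j i
      have step1 : (K j)ᴴ * K i = ∑ a : Fin N₂, (L a * K j)ᴴ * (L a * K i) := by
        have : (K j)ᴴ * K i = (K j)ᴴ * (∑ a : Fin N₂, (L a)ᴴ * L a) * K i := by
          rw [hL1, mul_one]
        rw [this, Finset.mul_sum, Finset.sum_mul]
        refine Finset.sum_congr rfl fun a _ => ?_
        simp only [conjTranspose_mul, mul_assoc]
      rw [step1]
      have hterm : ∀ a : Fin N₂, (L a * K j)ᴴ * (L a * K i)
          = ((starRingEnd ℂ) (c (a, j)) * c (a, i)) • (1 : Matrix ι ι ℂ) := by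
        intro a
        have h1 := hscal (a, j)
        have h2 := hscal (a, i)
        simp only [hM] at h1 h2
        rw [h1, h2, conjTranspose_smul, conjTranspose_one, Matrix.smul_mul,
          Matrix.mul_smul, one_mul, smul_smul]
        rfl
      rw [Finset.sum_congr rfl (fun a _ => hterm a), ← Finset.sum_smul]
    set r : Fin N₁ → ℝ := fun i => ∑ a, Complex.normSq (c (a, i)) with hr
    have hdr : ∀ i, (∑ a : Fin N₂, (starRingEnd ℂ) (c (a, i)) * c (a, i)) = ((r i : ℝ) : ℂ) := by
      intro i
      rw [hr]
      push_cast
      refine Finset.sum_congr rfl fun a _ => ?_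
      rw [mul_comm, Complex.mul_conj]
    have hsum : ∑ i, r i = 1 := by
      have h1 : (∑ i : Fin N₁, (K i)ᴴ * K i) p₀ p₀ = 1 := by
        rw [hK1]; simp [Matrix.one_apply]
      rw [Matrix.sum_apply] at h1
      have h2 : ∀ i : Fin N₁, ((K i)ᴴ * K i) p₀ p₀ = ((r i : ℝ) : ℂ) := by
        intro i
        rw [hd i i, hdr i, Matrix.smul_apply, Matrix.one_apply_eq, smul_eq_mul, mul_one]
      rw [Finset.sum_congr rfl (fun i _ => h2 i)] at h1
      exact_mod_cast h1
    have hex : ∃ i₀ : Fin N₁, r i₀ ≠ 0 := by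
      by_contra hcon
      push_neg at hcon
      rw [Finset.sum_congr rfl (fun i _ => hcon i)] at hsum
      simp at hsum
    obtain ⟨i₀, hi₀⟩ := hex
    have hrnn : 0 ≤ r i₀ := Finset.sum_nonneg fun a _ => Complex.normSq_nonneg _
    have hrpos : 0 < r i₀ := lt_of_le_of_ne hrnn (Ne.symm hi₀)
    set t : ℝ := Real.sqrt (r i₀) with htdef
    have htpos : 0 < t := Real.sqrt_pos.mpr hrpos
    have ht2 : (t : ℂ) * (t : ℂ) = ((r i₀ : ℝ) : ℂ) := by
      rw [← Complex.ofReal_mul, Real.mul_self_sqrt (le_of_lt hrpos)]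
    have htne : (t : ℂ) ≠ 0 := by exact_mod_cast ne_of_gt htpos
    set U : Matrix ι ι ℂ := ((t : ℂ))⁻¹ • K i₀ with hU
    have hstar_t : star ((t : ℂ))⁻¹ = ((t : ℂ))⁻¹ := by
      rw [Complex.star_def, ← Complex.ofReal_inv, Complex.conj_ofReal, Complex.ofReal_inv]
    have hUU : Uᴴ * U = 1 := by
      rw [hU, conjTranspose_smul, Matrix.smul_mul, Matrix.mul_smul, hd i₀ i₀, hdr i₀,
        hstar_t, smul_smul, smul_smul]
      have hsc : ((t:ℂ))⁻¹ * ((t:ℂ))⁻¹ * ((r i₀ : ℝ) : ℂ) = 1 := by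
        rw [← ht2]
        field_simp
      rw [hsc, one_smul]
    have hUU' : U * Uᴴ = 1 := mul_eq_one_comm.mp hUU
    have hUmem : U ∈ Matrix.unitaryGroup ι ℂ := by
      rw [Matrix.mem_unitaryGroup_iff]
      rw [Matrix.star_eq_conjTranspose]
      exact hUU'
    set μ : Fin N₁ → ℂ := fun i => ((t : ℂ))⁻¹ * ∑ a : Fin N₂, (starRingEnd ℂ) (c (a, i₀)) * c (a, i) with hμ
    have hKi : ∀ i : Fin N₁, K i = μ i • U := by
      intro i
      have h1 : Uᴴ * K i = (μ i) • (1 : Matrix ι ι ℂ) := by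
        rw [hU, conjTranspose_smul, Matrix.smul_mul, hd i₀ i, hstar_t, smul_smul, hμ]
      calc K i = (U * Uᴴ) * K i := by rw [hUU', one_mul]
        _ = U * (Uᴴ * K i) := by rw [mul_assoc]
        _ = U * ((μ i) • (1 : Matrix ι ι ℂ)) := by rw [h1]
        _ = (μ i) • U := by rw [Matrix.mul_smul, mul_one]
    have hμsum : (∑ i, (starRingEnd ℂ) (μ i) * μ i) = 1 := by
      have h1 : (∑ i : Fin N₁, (K i)ᴴ * K i) p₀ p₀ = 1 := by
        rw [hK1]; simp [Matrix.one_apply]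
      rw [Matrix.sum_apply] at h1
      have h2 : ∀ i : Fin N₁, ((K i)ᴴ * K i) p₀ p₀ = (starRingEnd ℂ) (μ i) * μ i := by
        intro i
        rw [hKi i, conjTranspose_smul, Matrix.smul_mul, Matrix.mul_smul, hUU,
          smul_smul, Matrix.smul_apply, Matrix.one_apply_eq, smul_eq_mul, mul_one]
        rfl
      rw [Finset.sum_congr rfl (fun i _ => h2 i)] at h1
      exact h1
    refine ⟨U, hUmem, fun ρ _ => ?_⟩
    rw [hK]
    have h3 : ∀ i : Fin N₁, K i * ρ * (K i)ᴴ
        = ((starRingEnd ℂ) (μ i) * μ i) • (U * ρ * Uᴴ) := by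
      intro i
      rw [hKi i, conjTranspose_smul, Matrix.smul_mul, Matrix.smul_mul, Matrix.mul_smul,
        smul_smul]
      rw [mul_comm ((starRingEnd ℂ) (μ i)) (μ i)]
      rfl
    rw [Finset.sum_congr rfl (fun i _ => h3 i), ← Finset.sum_smul, hμsum, one_smul]

end Stmt8
end

section
/- Let d be a contractive distance on states, g an invertible monotonically non-decreasing function with g(0)=0, and Q a bipartite correlation measure that is monotone under local operations and gd-continuous: |Q(x) − Q(y)| ≤ g(d(x,y)). Then for any decomposable map Λ = Λ_{BM} ∘ Λ_{AM} and any tripartite state ρ, Q_{A:MB}(Λ(ρ)) ≤ sup_{σ_{AM}} Q_{A:M}(σ_{AM}) + I_{AM:B}(ρ), where I_{AM:B}(ρ) = inf over product states σ_{AM} ⊗ σ_B of g(d(ρ, σ_{AM} ⊗ σ_B)). -/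
open Matrix
open scoped Kronecker ComplexOrder

namespace Stmt11
set_option linter.unusedSectionVars false

/-- A density matrix: positive semidefinite with unit trace. -/
def IsDensity {ι : Type*} [Fintype ι] (ρ : Matrix ι ι ℂ) : Prop :=
  ρ.PosSemidef ∧ ρ.trace = 1

/-- A completely positive trace-preserving map, presented by a Kraus decomposition
(equivalent to CPTP in finite dimensions). -/
def IsCPTP {ι κ : Type*} [Fintype ι] [DecidableEq ι] [Fintype κ] [DecidableEq κ]
    (Φ : Matrix ι ι ℂ → Matrix κ κ ℂ) : Prop :=
  ∃ (N : ℕ) (K : Fin N → Matrix κ ι ℂ),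
    (∀ ρ, Φ ρ = ∑ i, K i * ρ * (K i)ᴴ) ∧ ∑ i, (K i)ᴴ * K i = 1

/-- The extension `Λ' ⊗ id_B` of a map `Λ'` on `A ⊗ M` to the tripartite space
`A ⊗ B ⊗ M` (indices ordered as `A × (B × M)`), acting trivially on `B`. -/
def ExtAM {α β μ : Type*} (Λ : Matrix (α × μ) (α × μ) ℂ → Matrix (α × μ) (α × μ) ℂ) :
    Matrix (α × β × μ) (α × β × μ) ℂ → Matrix (α × β × μ) (α × β × μ) ℂ :=
  fun ρ x y => Λ (fun p q => ρ (p.1, x.2.1, p.2) (q.1, y.2.1, q.2)) (x.1, x.2.2) (y.1, y.2.2)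

/-- The extension `id_A ⊗ Λ'` of a map `Λ'` on `B ⊗ M` to the tripartite space,
acting trivially on `A`. -/
def ExtBM {α β μ : Type*} (Λ : Matrix (β × μ) (β × μ) ℂ → Matrix (β × μ) (β × μ) ℂ) :
    Matrix (α × β × μ) (α × β × μ) ℂ → Matrix (α × β × μ) (α × β × μ) ℂ :=
  fun ρ x y => Λ (fun p q => ρ (x.1, p) (y.1, q)) x.2 y.2

/-- The product state `σ_{AM} ⊗ σ_B` arranged on the tripartite space `A × (B × M)`. -/
def prodAMB {α β μ : Type*} (σAM : Matrix (α × μ) (α × μ) ℂ) (σB : Matrix β β ℂ) :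
    Matrix (α × β × μ) (α × β × μ) ℂ :=
  fun x y => σAM (x.1, x.2.2) (y.1, y.2.2) * σB x.2.1 y.2.1

/-- The product state `ρ_{AB} ⊗ σ_M` arranged on the tripartite space `A × (B × M)`. -/
def prodABM {α β μ : Type*} (ρAB : Matrix (α × β) (α × β) ℂ) (σM : Matrix μ μ ℂ) :
    Matrix (α × β × μ) (α × β × μ) ℂ :=
  fun x y => ρAB (x.1, x.2.1) (y.1, y.2.1) * σM x.2.2 y.2.2

/-- Partial trace over the mediator `M`. -/
noncomputable def ptraceM {α β μ : Type*} [Fintype μ] (X : Matrix (α × β × μ) (α × β × μ) ℂ) :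
    Matrix (α × β) (α × β) ℂ :=
  fun p q => ∑ m, X (p.1, p.2, m) (q.1, q.2, m)

/-- Partial trace over the second tensor factor. -/
noncomputable def ptrace2 {ι κ : Type*} [Fintype κ] (X : Matrix (ι × κ) (ι × κ) ℂ) : Matrix ι ι ℂ :=
  fun i j => ∑ k, X (i, k) (j, k)

/-- Partial trace over `B` and `M`. -/
noncomputable def ptraceBM {α β μ : Type*} [Fintype β] [Fintype μ] (X : Matrix (α × β × μ) (α × β × μ) ℂ) :
    Matrix α α ℂ :=
  fun a a' => ∑ b, ∑ m, X (a, b, m) (a', b, m)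


section Helpers

/-! ### Generic Kraus-map lemmas -/

lemma psd_kraus {ι κ : Type*} [Fintype ι] [Fintype κ] {N : ℕ}
    (K : Fin N → Matrix κ ι ℂ) {ρ : Matrix ι ι ℂ} (hρ : ρ.PosSemidef) :
    (∑ i, K i * ρ * (K i)ᴴ).PosSemidef :=
  Finset.sum_induction (fun i => K i * ρ * (K i)ᴴ) (fun M => M.PosSemidef)
    (fun _ _ ha hb => ha.add hb) Matrix.PosSemidef.zero
    (fun i _ => hρ.mul_mul_conjTranspose_same (K i))

lemma trace_kraus {ι κ : Type*} [Fintype ι] [DecidableEq ι] [Fintype κ] {N : ℕ}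
    (K : Fin N → Matrix κ ι ℂ) (hK : ∑ i, (K i)ᴴ * K i = 1) (ρ : Matrix ι ι ℂ) :
    (∑ i, K i * ρ * (K i)ᴴ).trace = ρ.trace := by
  rw [trace_sum]
  rw [Finset.sum_congr rfl (fun i _ => trace_mul_cycle (K i) ρ (K i)ᴴ)]
  rw [← trace_sum, ← Finset.sum_mul, hK, one_mul]

lemma density_kraus {ι κ : Type*} [Fintype ι] [DecidableEq ι] [Fintype κ] {N : ℕ}
    (K : Fin N → Matrix κ ι ℂ) (hK : ∑ i, (K i)ᴴ * K i = 1) {ρ : Matrix ι ι ℂ}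
    (hρ : IsDensity ρ) : IsDensity (∑ i, K i * ρ * (K i)ᴴ) :=
  ⟨psd_kraus K hρ.1, by rw [trace_kraus K hK, hρ.2]⟩

lemma kraus_smul {ι κ : Type*} [Fintype ι] [Fintype κ] {N : ℕ}
    (K : Fin N → Matrix κ ι ℂ) (Λ : Matrix ι ι ℂ → Matrix κ κ ℂ)
    (hΛ : ∀ ρ, Λ ρ = ∑ i, K i * ρ * (K i)ᴴ) (c : ℂ) (ρ : Matrix ι ι ℂ) :
    Λ (c • ρ) = c • Λ ρ := by
  simp [hΛ, Matrix.mul_smul, Matrix.smul_mul, Finset.smul_sum]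

lemma kron_conjTranspose {ι κ ι' κ' : Type*} (A : Matrix ι κ ℂ) (B : Matrix ι' κ' ℂ) :
    (A ⊗ₖ B)ᴴ = Aᴴ ⊗ₖ Bᴴ := by
  ext x y; simp [conjTranspose_apply, kroneckerMap_apply, star_mul', mul_comm]

/-- Composition of two Kraus families, reindexed over `Fin (N' * N)`. -/
lemma kraus_comp {ι : Type*} [Fintype ι] [DecidableEq ι] {N N' : ℕ}
    (K : Fin N → Matrix ι ι ℂ) (L : Fin N' → Matrix ι ι ℂ)
    (hK : ∑ i, (K i)ᴴ * K i = 1) (hL : ∑ j, (L j)ᴴ * L j = 1) :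
    ∃ J : Fin (N' * N) → Matrix ι ι ℂ,
      (∀ X : Matrix ι ι ℂ,
        ∑ j, L j * (∑ i, K i * X * (K i)ᴴ) * (L j)ᴴ = ∑ r, J r * X * (J r)ᴴ) ∧
      ∑ r, (J r)ᴴ * J r = 1 := by
  refine ⟨fun r => L (finProdFinEquiv.symm r).1 * K (finProdFinEquiv.symm r).2, ?_, ?_⟩
  · intro X
    rw [← Equiv.sum_comp finProdFinEquiv
      (fun r => L (finProdFinEquiv.symm r).1 * K (finProdFinEquiv.symm r).2 * X *
        (L (finProdFinEquiv.symm r).1 * K (finProdFinEquiv.symm r).2)ᴴ)]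
    simp only [Equiv.symm_apply_apply]
    rw [Fintype.sum_prod_type]
    refine Finset.sum_congr rfl fun j _ => ?_
    rw [Finset.mul_sum, Finset.sum_mul]
    refine Finset.sum_congr rfl fun i _ => ?_
    simp only [conjTranspose_mul, mul_assoc]
  · rw [← Equiv.sum_comp finProdFinEquiv
      (fun r => (L (finProdFinEquiv.symm r).1 * K (finProdFinEquiv.symm r).2)ᴴ *
        (L (finProdFinEquiv.symm r).1 * K (finProdFinEquiv.symm r).2))]
    simp only [Equiv.symm_apply_apply]
    rw [Fintype.sum_prod_type, Finset.sum_comm]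
    have h2 : ∀ i : Fin N, ∑ j : Fin N', (L j * K i)ᴴ * (L j * K i) = (K i)ᴴ * K i := by
      intro i
      have h3 : ∀ j : Fin N', (L j * K i)ᴴ * (L j * K i) = (K i)ᴴ * ((L j)ᴴ * L j) * K i := by
        intro j; simp only [conjTranspose_mul, mul_assoc]
      simp_rw [h3]
      rw [← Finset.sum_mul, ← Finset.mul_sum, hL, mul_one]
    simp_rw [h2, hK]

end Helpers

section Ext
variable {α β μ : Type} [Fintype α] [DecidableEq α] [Fintype β] [DecidableEq β]
  [Fintype μ] [DecidableEq μ]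

/-- Kraus operator on `A⊗M` extended by the identity on `B`, in index order `A × (B × M)`. -/
def eKAM (β : Type) [Fintype β] [DecidableEq β] (K : Matrix (α × μ) (α × μ) ℂ) :
    Matrix (α × β × μ) (α × β × μ) ℂ :=
  fun x y => K (x.1, x.2.2) (y.1, y.2.2) * (if x.2.1 = y.2.1 then 1 else 0)

lemma eKAM_conjTranspose (K : Matrix (α × μ) (α × μ) ℂ) :
    (eKAM β K)ᴴ = eKAM β Kᴴ := by
  ext x y
  simp [eKAM, conjTranspose_apply, star_mul', eq_comm]
  by_cases h : x.2.1 = y.2.1 <;> simp [h, mul_comm]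

lemma eKAM_mul (K K' : Matrix (α × μ) (α × μ) ℂ) :
    eKAM β K * eKAM β K' = eKAM β (K * K') := by
  ext x y
  simp only [eKAM, mul_apply, Fintype.sum_prod_type]
  simp only [mul_ite, mul_one, mul_zero, ite_mul, zero_mul]
  rw [Finset.sum_comm]
  simp [Finset.sum_ite_eq' Finset.univ (x.2.1)]

lemma eKAM_sum_one {N : ℕ} (K : Fin N → Matrix (α × μ) (α × μ) ℂ)
    (hK : ∑ i, (K i)ᴴ * K i = 1) :
    ∑ i, (eKAM β (K i))ᴴ * eKAM β (K i) = (1 : Matrix (α × β × μ) (α × β × μ) ℂ) := by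
  have h1 : ∀ i, (eKAM β (K i))ᴴ * eKAM β (K i) = eKAM β ((K i)ᴴ * K i) := by
    intro i; rw [eKAM_conjTranspose, eKAM_mul]
  simp_rw [h1]
  ext x y
  have h2 : (∑ i, eKAM β ((K i)ᴴ * K i)) x y = eKAM β (∑ i, (K i)ᴴ * K i) x y := by
    simp [eKAM, Matrix.sum_apply, Finset.sum_mul]
  rw [h2, hK]
  simp [eKAM, one_apply, Prod.ext_iff]
  by_cases h1 : x.1 = y.1 <;> by_cases h2 : x.2.1 = y.2.1 <;> by_cases h3 : x.2.2 = y.2.2 <;>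
    simp [h1, h2, h3]

lemma extAM_rep {N : ℕ} (K : Fin N → Matrix (α × μ) (α × μ) ℂ)
    (Λ : Matrix (α × μ) (α × μ) ℂ → Matrix (α × μ) (α × μ) ℂ)
    (hΛ : ∀ ρ, Λ ρ = ∑ i, K i * ρ * (K i)ᴴ) (ρ : Matrix (α × β × μ) (α × β × μ) ℂ) :
    ExtAM (β := β) Λ ρ = ∑ i, eKAM β (K i) * ρ * (eKAM β (K i))ᴴ := by
  ext x y
  obtain ⟨a, b, m⟩ := x
  obtain ⟨a', b', m'⟩ := y
  show Λ (Matrix.of fun p q => ρ (p.1, b, p.2) (q.1, b', q.2)) (a, m) (a', m') = _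
  rw [hΛ]
  simp only [ExtAM, hΛ, Matrix.of_apply, Matrix.sum_apply, mul_apply, eKAM_conjTranspose, eKAM,
    Fintype.sum_prod_type, conjTranspose_apply]
  refine Finset.sum_congr rfl fun i _ => ?_
  simp only [mul_ite, mul_one, mul_zero, ite_mul, zero_mul, Finset.mul_sum, Finset.sum_mul,
    Finset.sum_ite_irrel, Finset.sum_const_zero, Finset.sum_ite_eq, Finset.sum_ite_eq',
    Finset.mem_univ, if_true]

lemma extBM_rep {N : ℕ} (L : Fin N → Matrix (β × μ) (β × μ) ℂ)
    (Λ : Matrix (β × μ) (β × μ) ℂ → Matrix (β × μ) (β × μ) ℂ)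
    (hΛ : ∀ ρ, Λ ρ = ∑ j, L j * ρ * (L j)ᴴ) (ρ : Matrix (α × β × μ) (α × β × μ) ℂ) :
    ExtBM (α := α) Λ ρ =
      ∑ j, ((1 : Matrix α α ℂ) ⊗ₖ L j) * ρ * ((1 : Matrix α α ℂ) ⊗ₖ L j)ᴴ := by
  ext x y
  obtain ⟨a, bm⟩ := x
  obtain ⟨a', bm'⟩ := y
  show Λ (Matrix.of fun p q => ρ (a, p) (a', q)) bm bm' = _
  rw [hΛ]
  simp only [ExtBM, hΛ, Matrix.of_apply, Matrix.sum_apply, mul_apply, conjTranspose_apply,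
    Fintype.sum_prod_type, kroneckerMap_apply, one_apply, star_mul', star_one, star_zero,
    ite_mul, mul_ite, zero_mul, mul_zero, mul_one, one_mul,
    Finset.mul_sum, Finset.sum_mul,
    Finset.sum_ite_irrel, Finset.sum_const_zero, Finset.sum_ite_eq, Finset.sum_ite_eq',
    Finset.mem_univ, if_true, apply_ite (star : ℂ → ℂ)]

lemma one_kron_sum_one {N : ℕ} (L : Fin N → Matrix (β × μ) (β × μ) ℂ)
    (hL : ∑ j, (L j)ᴴ * L j = 1) :
    ∑ j, ((1 : Matrix α α ℂ) ⊗ₖ L j)ᴴ * ((1 : Matrix α α ℂ) ⊗ₖ L j) = 1 := by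
  have h1 : ∀ j, ((1 : Matrix α α ℂ) ⊗ₖ L j)ᴴ * ((1 : Matrix α α ℂ) ⊗ₖ L j)
      = (1 : Matrix α α ℂ) ⊗ₖ ((L j)ᴴ * L j) := by
    intro j
    rw [kron_conjTranspose, ← mul_kronecker_mul, conjTranspose_one, one_mul]
  simp_rw [h1]
  ext x y
  rw [Matrix.sum_apply]
  simp only [kroneckerMap_apply]
  rw [← Finset.mul_sum]
  have h2 : (∑ i, ((L i)ᴴ * L i) x.2 y.2) = (1 : Matrix (β × μ) (β × μ) ℂ) x.2 y.2 := by
    rw [← hL]; simp [Matrix.sum_apply]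
  rw [h2]
  simp only [one_apply, Prod.ext_iff]
  by_cases h1 : x.1 = y.1 <;> by_cases h3 : x.2.1 = y.2.1 <;> by_cases h4 : x.2.2 = y.2.2 <;>
    simp [h1, h3, h4]

lemma extAM_prod {N : ℕ} (K : Fin N → Matrix (α × μ) (α × μ) ℂ)
    (Λ : Matrix (α × μ) (α × μ) ℂ → Matrix (α × μ) (α × μ) ℂ)
    (hΛ : ∀ ρ, Λ ρ = ∑ i, K i * ρ * (K i)ᴴ)
    (σAM : Matrix (α × μ) (α × μ) ℂ) (σB : Matrix β β ℂ) :
    ExtAM (β := β) Λ (prodAMB σAM σB) = prodAMB (Λ σAM) σB := by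
  ext x y
  show Λ (fun p q => σAM (p.1, p.2) (q.1, q.2) * σB x.2.1 y.2.1) (x.1, x.2.2) (y.1, y.2.2) = _
  have h1 : (fun p q => σAM (p.1, p.2) (q.1, q.2) * σB x.2.1 y.2.1)
      = (σB x.2.1 y.2.1) • σAM := by
    ext p q; simp [mul_comm]
  rw [h1, kraus_smul K Λ hΛ]
  simp [prodAMB, mul_comm]

/-- Swap operator from `μ × β` to `β × μ`. -/
def Sw (β μ : Type) [DecidableEq β] [DecidableEq μ] : Matrix (β × μ) (μ × β) ℂ :=
  fun x y => if x.1 = y.2 ∧ x.2 = y.1 then 1 else 0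

lemma sw_sum_one : ∑ _i : Fin 1, (Sw β μ)ᴴ * (Sw β μ) = (1 : Matrix (μ × β) (μ × β) ℂ) := by
  rw [Fin.sum_univ_one]
  ext x y
  simp only [mul_apply, conjTranspose_apply, Sw, Fintype.sum_prod_type, apply_ite (star : ℂ → ℂ),
    star_one, star_zero, ite_mul, one_mul, zero_mul, mul_ite, mul_one, mul_zero]
  simp only [ite_and, Finset.sum_ite_irrel, Finset.sum_const_zero, Finset.sum_ite_eq,
    Finset.sum_ite_eq', Finset.mem_univ, if_true, one_apply, Prod.ext_iff]
  by_cases h1 : x.1 = y.1 <;> by_cases h2 : x.2 = y.2 <;> simp [h1, h2, eq_comm]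

lemma sw_prod (τ : Matrix (α × μ) (α × μ) ℂ) (σB : Matrix β β ℂ) :
    ((1 : Matrix α α ℂ) ⊗ₖ Sw β μ) * prodABM τ σB * ((1 : Matrix α α ℂ) ⊗ₖ Sw β μ)ᴴ
      = prodAMB τ σB := by
  ext x y
  obtain ⟨a, b, m⟩ := x
  obtain ⟨a', b', m'⟩ := y
  simp only [mul_apply, conjTranspose_apply, kroneckerMap_apply, Sw, prodABM, prodAMB,
    Fintype.sum_prod_type, one_apply, apply_ite (star : ℂ → ℂ), star_one, star_zero,
    ite_mul, one_mul, zero_mul, mul_ite, mul_one, mul_zero, ite_and,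
    Finset.sum_ite_irrel, Finset.sum_const_zero, Finset.sum_ite_eq, Finset.sum_ite_eq',
    Finset.mem_univ, if_true]

end Ext

section Prepare

open scoped MatrixOrder in
/-- A square root of a positive semidefinite matrix. -/
noncomputable def psdSqrt {ι : Type} [Fintype ι] [DecidableEq ι] {A : Matrix ι ι ℂ}
    (_ : A.PosSemidef) : Matrix ι ι ℂ := CFC.sqrt A

open scoped MatrixOrder in
lemma psdSqrt_isHermitian {ι : Type} [Fintype ι] [DecidableEq ι] {A : Matrix ι ι ℂ}
    (h : A.PosSemidef) : (psdSqrt h).IsHermitian := (CFC.sqrt_nonneg A).posSemidef.1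

open scoped MatrixOrder in
lemma psdSqrt_mul_self {ι : Type} [Fintype ι] [DecidableEq ι] {A : Matrix ι ι ℂ}
    (h : A.PosSemidef) : psdSqrt h * psdSqrt h = A := CFC.sqrt_mul_sqrt_self A h.nonneg

/-- Basis density matrices on `Bool`. -/
def eb (j : Bool) : Matrix Bool Bool ℂ :=
  Matrix.of fun c c' => if c = j ∧ c' = j then 1 else 0

/-- Prepare-channel Kraus operators. -/
noncomputable def prepK {ι : Type} [Fintype ι] [DecidableEq ι] (x : Bool → Matrix ι ι ℂ)
    (hx : ∀ i, (x i).PosSemidef) (p : Bool × ι) : Matrix ι Bool ℂ :=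
  Matrix.of fun r c => psdSqrt (hx p.1) r p.2 * (if c = p.1 then 1 else 0)

lemma prepK_sum_one {ι : Type} [Fintype ι] [DecidableEq ι] (x : Bool → Matrix ι ι ℂ)
    (hx : ∀ i, (x i).PosSemidef) (htr : ∀ i, (x i).trace = 1) :
    ∑ p : Bool × ι, (prepK x hx p)ᴴ * prepK x hx p = 1 := by
  ext c c'
  simp only [Matrix.sum_apply, mul_apply, conjTranspose_apply, prepK, Matrix.of_apply,
    Fintype.sum_prod_type, star_mul', apply_ite (star : ℂ → ℂ), star_one, star_zero,
    ite_mul, one_mul, zero_mul, mul_ite, mul_one, mul_zero]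
  have key : ∀ i : Bool, ∀ k : ι, ∑ r : ι, star (psdSqrt (hx i) r k) * psdSqrt (hx i) r k
      = (x i) k k := by
    intro i k
    have h1 : ∀ r, star (psdSqrt (hx i) r k) = psdSqrt (hx i) k r :=
      fun r => (psdSqrt_isHermitian (hx i)).apply k r
    simp_rw [h1]
    have h2 := congrFun (congrFun (psdSqrt_mul_self (hx i)) k) k
    rw [← h2, mul_apply]
  simp only [Finset.sum_ite_irrel, Finset.sum_const_zero, Finset.sum_ite_eq,
    Finset.sum_ite_eq', Finset.mem_univ, if_true]
  by_cases h : c = c'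
  · subst h
    have htr' : ∑ k : ι, x c k k = 1 := by
      have h3 := htr c
      rwa [Matrix.trace,
        show ∀ A : Matrix ι ι ℂ, Matrix.diag A = fun i => A i i from fun _ => rfl] at h3
    simp only [if_pos rfl, one_apply_eq, ite_self]
    simp only [key]
    exact htr'
  · simp [h, one_apply, Ne.symm h]

lemma prepK_apply_eb {ι : Type} [Fintype ι] [DecidableEq ι] (x : Bool → Matrix ι ι ℂ)
    (hx : ∀ i, (x i).PosSemidef) (j : Bool) :
    ∑ p : Bool × ι, prepK x hx p * eb j * (prepK x hx p)ᴴ = x j := by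
  ext r r'
  simp only [Matrix.sum_apply, mul_apply, conjTranspose_apply, prepK, eb, Matrix.of_apply,
    Fintype.sum_prod_type, star_mul', apply_ite (star : ℂ → ℂ), star_one, star_zero,
    ite_mul, one_mul, zero_mul, mul_ite, mul_one, mul_zero, ite_and,
    Finset.sum_ite_irrel, Finset.sum_const_zero, Finset.sum_ite_eq, Finset.sum_ite_eq',
    Finset.mem_univ, if_true, Finset.sum_boole]
  have h1 : ∀ k, star (psdSqrt (hx j) r' k) = psdSqrt (hx j) k r' :=
    fun k => (psdSqrt_isHermitian (hx j)).apply k r'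
  simp_rw [h1]
  have h2 := congrFun (congrFun (psdSqrt_mul_self (hx j)) r) r'
  rw [← h2, mul_apply]

lemma uniform_density (ι : Type) [Fintype ι] [DecidableEq ι] [Nonempty ι] :
    IsDensity ((Fintype.card ι : ℂ)⁻¹ • 1 : Matrix ι ι ℂ) := by
  have hcard : (Fintype.card ι : ℂ) ≠ 0 := by
    exact_mod_cast Nat.cast_ne_zero.mpr Fintype.card_ne_zero
  constructor
  · have h1 : ((Fintype.card ι : ℂ)⁻¹ • 1 : Matrix ι ι ℂ)
        = Matrix.diagonal (fun _ => (Fintype.card ι : ℂ)⁻¹) := by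
      ext i j
      by_cases h : i = j <;> simp [Matrix.diagonal, Matrix.one_apply, h]
    rw [h1]
    refine Matrix.posSemidef_diagonal_iff.mpr fun i => ?_
    rw [show ((Fintype.card ι : ℂ))⁻¹ = Complex.ofReal ((Fintype.card ι : ℝ))⁻¹ by
      push_cast; ring]
    rw [Complex.zero_le_real]
    positivity
  · rw [Matrix.trace_smul, Matrix.trace_one]
    simp [hcard]

lemma eb_density (j : Bool) : IsDensity (eb j) := by
  constructor
  · have h1 : eb j = Matrix.diagonal (fun c => if c = j then (1:ℂ) else 0) := by
      ext c c'
      by_cases h1 : c = c' <;> by_cases h2 : c = j <;>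
        simp_all [eb, Matrix.diagonal, eq_comm]
    rw [h1]
    refine Matrix.posSemidef_diagonal_iff.mpr fun i => ?_
    by_cases h : i = j <;> simp [h]
  · simp [Matrix.trace, eb, Matrix.diag]

end Prepare

/-- Let `d` be a contractive distance on states, `g` an invertible monotone
non-decreasing function with `g 0 = 0`, and `Q` a bipartite correlation measure monotone
under local operations and gd-continuous.  Then for any decomposable map
`Λ = Λ_{BM} ∘ Λ_{AM}` and any tripartite state `ρ`,
`Q_{A:MB}(Λ(ρ)) ≤ sup_{σ_{AM}} Q_{A:M}(σ_{AM}) + I_{AM:B}(ρ)`. -/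
theorem decomposable_bound_general_state
    {α β μ : Type} [Fintype α] [DecidableEq α] [Fintype β] [DecidableEq β]
    [Fintype μ] [DecidableEq μ]
    (Q : ∀ (γ δ : Type) [Fintype γ] [DecidableEq γ] [Fintype δ] [DecidableEq δ],
      Matrix (γ × δ) (γ × δ) ℂ → ℝ)
    (d : ∀ (ι : Type) [Fintype ι] [DecidableEq ι], Matrix ι ι ℂ → Matrix ι ι ℂ → ℝ)
    (g g' : ℝ → ℝ) (hg : Monotone g) (hg0 : g 0 = 0)
    (hgg' : ∀ x, g' (g x) = x) (hg'g : ∀ x, g (g' x) = x)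
    -- the distance is contractive under CPTP maps
    (hd : ∀ (ι κ : Type) [Fintype ι] [DecidableEq ι] [Fintype κ] [DecidableEq κ]
      (N : ℕ) (K : Fin N → Matrix κ ι ℂ), (∑ i, (K i)ᴴ * K i = 1) →
      ∀ ρ σ : Matrix ι ι ℂ,
        d κ (∑ i, K i * ρ * (K i)ᴴ) (∑ i, K i * σ * (K i)ᴴ) ≤ d ι ρ σ)
    -- gd-continuity of Q
    (hQc : ∀ (γ δ : Type) [Fintype γ] [DecidableEq γ] [Fintype δ] [DecidableEq δ]
      (ρ σ : Matrix (γ × δ) (γ × δ) ℂ), |Q γ δ ρ - Q γ δ σ| ≤ g (d (γ × δ) ρ σ))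
    -- monotonicity under CPTP maps on the first subsystem
    (hmonoL : ∀ (γ γ' δ : Type) [Fintype γ] [DecidableEq γ] [Fintype γ'] [DecidableEq γ']
      [Fintype δ] [DecidableEq δ] (N : ℕ) (K : Fin N → Matrix γ' γ ℂ),
      (∑ i, (K i)ᴴ * K i = 1) → ∀ ρ : Matrix (γ × δ) (γ × δ) ℂ,
        Q γ' δ (∑ i, (K i ⊗ₖ (1 : Matrix δ δ ℂ)) * ρ * (K i ⊗ₖ (1 : Matrix δ δ ℂ))ᴴ) ≤ Q γ δ ρ)
    -- monotonicity under CPTP maps on the second subsystem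
    (hmonoR : ∀ (γ δ δ' : Type) [Fintype γ] [DecidableEq γ] [Fintype δ] [DecidableEq δ]
      [Fintype δ'] [DecidableEq δ'] (N : ℕ) (K : Fin N → Matrix δ' δ ℂ),
      (∑ i, (K i)ᴴ * K i = 1) → ∀ ρ : Matrix (γ × δ) (γ × δ) ℂ,
        Q γ δ' (∑ i, ((1 : Matrix γ γ ℂ) ⊗ₖ K i) * ρ * ((1 : Matrix γ γ ℂ) ⊗ₖ K i)ᴴ) ≤ Q γ δ ρ)
    -- invariance under appending an uncorrelated ancilla to the second subsystem
    (hanc : ∀ (γ δ ε : Type) [Fintype γ] [DecidableEq γ] [Fintype δ] [DecidableEq δ]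
      [Fintype ε] [DecidableEq ε] (ρ : Matrix (γ × δ) (γ × δ) ℂ) (σ : Matrix ε ε ℂ),
      IsDensity σ →
        Q γ (δ × ε) (fun x y => ρ (x.1, x.2.1) (y.1, y.2.1) * σ x.2.2 y.2.2) = Q γ δ ρ)
    (ΛAM : Matrix (α × μ) (α × μ) ℂ → Matrix (α × μ) (α × μ) ℂ) (hΛAM : IsCPTP ΛAM)
    (ΛBM : Matrix (β × μ) (β × μ) ℂ → Matrix (β × μ) (β × μ) ℂ) (hΛBM : IsCPTP ΛBM)
    (ρ : Matrix (α × β × μ) (α × β × μ) ℂ) (hρ : IsDensity ρ) :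
    Q α (β × μ) (ExtBM (β := β) ΛBM (ExtAM (β := β) ΛAM ρ)) ≤
      sSup {x : ℝ | ∃ σ : Matrix (α × μ) (α × μ) ℂ, IsDensity σ ∧ x = Q α μ σ} +
        sInf {x : ℝ | ∃ (σAM : Matrix (α × μ) (α × μ) ℂ) (σB : Matrix β β ℂ),
          IsDensity σAM ∧ IsDensity σB ∧ x = g (d (α × β × μ) ρ (prodAMB σAM σB))} := by
  classical
  obtain ⟨N, K, hK, hK1⟩ := hΛAM
  obtain ⟨N', L, hL, hL1⟩ := hΛBM
  -- Nonemptiness of the index types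
  have hne : Nonempty (α × β × μ) := by
    by_contra h
    rw [not_nonempty_iff] at h
    have h0 : ρ.trace = 0 := by simp [Matrix.trace]
    rw [hρ.2] at h0
    exact one_ne_zero h0
  obtain ⟨a0, b0, m0⟩ := hne.some
  have hαμ : Nonempty (α × μ) := ⟨(a0, m0)⟩
  have hβ : Nonempty β := ⟨b0⟩
  -- representations of the extended maps
  have f1 := extAM_rep (β := β) K ΛAM hK
  have f2 : ∑ i, (eKAM β (K i))ᴴ * eKAM β (K i) = 1 := eKAM_sum_one K hK1
  have f3 := extBM_rep (α := α) L ΛBM hL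
  have f4 : ∑ j, ((1 : Matrix α α ℂ) ⊗ₖ L j)ᴴ * ((1 : Matrix α α ℂ) ⊗ₖ L j) = 1 :=
    one_kron_sum_one L hL1
  obtain ⟨J, hJrep, hJ1⟩ :=
    kraus_comp (fun i => eKAM β (K i)) (fun j => (1 : Matrix α α ℂ) ⊗ₖ L j) f2 f4
  have e1 : ∀ X, ExtBM (β := β) ΛBM (ExtAM (β := β) ΛAM X) = ∑ r, J r * X * (J r)ᴴ := by
    intro X
    rw [f3, f1]
    exact hJrep X
  -- contractivity of the composite map
  have f5 : ∀ X Y : Matrix (α × β × μ) (α × β × μ) ℂ,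
      d (α × β × μ) (ExtBM (β := β) ΛBM (ExtAM (β := β) ΛAM X))
        (ExtBM (β := β) ΛBM (ExtAM (β := β) ΛAM Y)) ≤ d (α × β × μ) X Y := by
    intro X Y
    rw [e1 X, e1 Y]
    exact hd _ _ _ J hJ1 X Y
  -- a uniform bound on distances between densities, via the prepare channel
  have hdb : ∀ σ τ : Matrix (α × μ) (α × μ) ℂ, IsDensity σ → IsDensity τ →
      d (α × μ) σ τ ≤ d Bool (eb false) (eb true) := by
    intro σ τ hσ hτ
    set x : Bool → Matrix (α × μ) (α × μ) ℂ := fun j => bif j then τ else σ with hxdef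
    have hx : ∀ i, (x i).PosSemidef := by intro i; cases i; exacts [hσ.1, hτ.1]
    have htr : ∀ i, (x i).trace = 1 := by intro i; cases i; exacts [hσ.2, hτ.2]
    set e : Fin (Fintype.card (Bool × (α × μ))) ≃ Bool × (α × μ) :=
      (Fintype.equivFin (Bool × (α × μ))).symm with hedef
    have h1 : ∑ r, (prepK x hx (e r))ᴴ * prepK x hx (e r) = 1 := by
      rw [Equiv.sum_comp e (fun p => (prepK x hx p)ᴴ * prepK x hx p)]
      exact prepK_sum_one x hx htr
    have h2 : ∀ j, ∑ r, prepK x hx (e r) * eb j * (prepK x hx (e r))ᴴ = x j := by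
      intro j
      rw [Equiv.sum_comp e (fun p => prepK x hx p * eb j * (prepK x hx p)ᴴ)]
      exact prepK_apply_eb x hx j
    have h3 := hd Bool (α × μ) _ (fun r => prepK x hx (e r)) h1 (eb false) (eb true)
    rwa [h2 false, h2 true] at h3
  -- the supremum set and its bound
  set SupSet : Set ℝ :=
    {x : ℝ | ∃ σ : Matrix (α × μ) (α × μ) ℂ, IsDensity σ ∧ x = Q α μ σ} with hSupSet
  have hu : IsDensity ((Fintype.card (α × μ) : ℂ)⁻¹ • 1 : Matrix (α × μ) (α × μ) ℂ) :=
    uniform_density (α × μ)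
  have hbdd : BddAbove SupSet := by
    refine ⟨Q α μ ((Fintype.card (α × μ) : ℂ)⁻¹ • 1) + g (d Bool (eb false) (eb true)), ?_⟩
    rintro x ⟨σ, hσ, rfl⟩
    have h4 := hQc α μ σ ((Fintype.card (α × μ) : ℂ)⁻¹ • 1)
    have h5 := hg (hdb σ _ hσ hu)
    have h6 := (abs_le.mp h4).1
    linarith [(abs_le.mp h4).2]
  have hQle_sup : ∀ τ' : Matrix (α × μ) (α × μ) ℂ, IsDensity τ' → Q α μ τ' ≤ sSup SupSet := by
    intro τ' hτ'
    exact le_csSup hbdd ⟨τ', hτ', rfl⟩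
  -- the key bound for each product state
  have key : ∀ (σAM : Matrix (α × μ) (α × μ) ℂ) (σB : Matrix β β ℂ),
      IsDensity σAM → IsDensity σB →
      Q α (β × μ) (ExtBM (β := β) ΛBM (ExtAM (β := β) ΛAM ρ)) ≤
        sSup SupSet + g (d (α × β × μ) ρ (prodAMB σAM σB)) := by
    intro σAM σB hσAM hσB
    have hτ : IsDensity (ΛAM σAM) := by
      rw [hK]; exact density_kraus K hK1 hσAM
    have h6 := hQc α (β × μ) (ExtBM (β := β) ΛBM (ExtAM (β := β) ΛAM ρ))
      (ExtBM (β := β) ΛBM (ExtAM (β := β) ΛAM (prodAMB σAM σB)))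
    have h7 := f5 ρ (prodAMB σAM σB)
    have h8 : ExtAM (β := β) ΛAM (prodAMB σAM σB) = prodAMB (ΛAM σAM) σB :=
      extAM_prod K ΛAM hK σAM σB
    have h9 : Q α (β × μ) (ExtBM (β := β) ΛBM (prodAMB (ΛAM σAM) σB)) ≤
        Q α (β × μ) (prodAMB (ΛAM σAM) σB) := by
      rw [f3]
      exact hmonoR α (β × μ) (β × μ) N' L hL1 (prodAMB (ΛAM σAM) σB)
    have h10 : Q α (β × μ) (prodAMB (ΛAM σAM) σB) ≤ Q α (μ × β) (prodABM (ΛAM σAM) σB) := by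
      have h := hmonoR α (μ × β) (β × μ) 1 (fun _ => Sw β μ) sw_sum_one (prodABM (ΛAM σAM) σB)
      rw [Fin.sum_univ_one] at h
      rwa [sw_prod (ΛAM σAM) σB] at h
    have h11 : Q α (μ × β) (prodABM (ΛAM σAM) σB) = Q α μ (ΛAM σAM) :=
      hanc α μ β (ΛAM σAM) σB hσB
    have h12 : Q α μ (ΛAM σAM) ≤ sSup SupSet := hQle_sup (ΛAM σAM) hτ
    rw [h8] at h6 h7
    have h13 := (abs_le.mp h6).2
    have h14 := hg h7
    linarith
  -- conclude via the infimum
  set InfSet : Set ℝ :=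
    {x : ℝ | ∃ (σAM : Matrix (α × μ) (α × μ) ℂ) (σB : Matrix β β ℂ),
      IsDensity σAM ∧ IsDensity σB ∧ x = g (d (α × β × μ) ρ (prodAMB σAM σB))} with hInfSet
  have hInf_ne : InfSet.Nonempty := by
    refine ⟨_, (Fintype.card (α × μ) : ℂ)⁻¹ • 1, (Fintype.card β : ℂ)⁻¹ • 1,
      hu, uniform_density β, rfl⟩
  have hle : Q α (β × μ) (ExtBM (β := β) ΛBM (ExtAM (β := β) ΛAM ρ)) - sSup SupSet ≤
      sInf InfSet := by
    refine le_csInf hInf_ne ?_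
    rintro x ⟨σAM, σB, h1, h2, rfl⟩
    linarith [key σAM σB h1 h2]
  linarith

end Stmt11
end

section
/- Under the hypotheses of the decomposability bound (Q gd-continuous with function g and contractive distance d, monotone under local operations), for any CPTP map Λ on A⊗B⊗M and any state ρ_0, the degree of non-decomposability ND(Λ) = inf over decomposable maps λ of sup_σ d(Λ(σ), λ(σ)) satisfies ND(Λ) ≥ g^{-1}( Q_{A:MB}(Λ(ρ_0)) − B(ρ_0) ), where B(ρ_0) = sup_{σ_{AM}} Q_{A:M}(σ_{AM}) + I_{AM:B}(ρ_0), whenever Q_{A:MB}(Λ(ρ_0)) ≥ B(ρ_0). -/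
open Matrix
open scoped Kronecker ComplexOrder

namespace Stmt12

/-- A density matrix: positive semidefinite with unit trace. -/
def IsDensity {ι : Type*} [Fintype ι] (ρ : Matrix ι ι ℂ) : Prop :=
  ρ.PosSemidef ∧ ρ.trace = 1

/-- A completely positive trace-preserving map, presented by a Kraus decomposition
(equivalent to CPTP in finite dimensions). -/
def IsCPTP {ι κ : Type*} [Fintype ι] [DecidableEq ι] [Fintype κ] [DecidableEq κ]
    (Φ : Matrix ι ι ℂ → Matrix κ κ ℂ) : Prop :=
  ∃ (N : ℕ) (K : Fin N → Matrix κ ι ℂ),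
    (∀ ρ, Φ ρ = ∑ i, K i * ρ * (K i)ᴴ) ∧ ∑ i, (K i)ᴴ * K i = 1

/-- The extension `Λ' ⊗ id_B` of a map `Λ'` on `A ⊗ M` to the tripartite space
`A ⊗ B ⊗ M` (indices ordered as `A × (B × M)`), acting trivially on `B`. -/
def ExtAM {α β μ : Type*} (Λ : Matrix (α × μ) (α × μ) ℂ → Matrix (α × μ) (α × μ) ℂ) :
    Matrix (α × β × μ) (α × β × μ) ℂ → Matrix (α × β × μ) (α × β × μ) ℂ :=
  fun ρ x y => Λ (fun p q => ρ (p.1, x.2.1, p.2) (q.1, y.2.1, q.2)) (x.1, x.2.2) (y.1, y.2.2)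

/-- The extension `id_A ⊗ Λ'` of a map `Λ'` on `B ⊗ M` to the tripartite space,
acting trivially on `A`. -/
def ExtBM {α β μ : Type*} (Λ : Matrix (β × μ) (β × μ) ℂ → Matrix (β × μ) (β × μ) ℂ) :
    Matrix (α × β × μ) (α × β × μ) ℂ → Matrix (α × β × μ) (α × β × μ) ℂ :=
  fun ρ x y => Λ (fun p q => ρ (x.1, p) (y.1, q)) x.2 y.2

/-- The product state `σ_{AM} ⊗ σ_B` arranged on the tripartite space `A × (B × M)`. -/
def prodAMB {α β μ : Type*} (σAM : Matrix (α × μ) (α × μ) ℂ) (σB : Matrix β β ℂ) :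
    Matrix (α × β × μ) (α × β × μ) ℂ :=
  fun x y => σAM (x.1, x.2.2) (y.1, y.2.2) * σB x.2.1 y.2.1

/-- The product state `ρ_{AB} ⊗ σ_M` arranged on the tripartite space `A × (B × M)`. -/
def prodABM {α β μ : Type*} (ρAB : Matrix (α × β) (α × β) ℂ) (σM : Matrix μ μ ℂ) :
    Matrix (α × β × μ) (α × β × μ) ℂ :=
  fun x y => ρAB (x.1, x.2.1) (y.1, y.2.1) * σM x.2.2 y.2.2

/-- Partial trace over the mediator `M`. -/
noncomputable def ptraceM {α β μ : Type*} [Fintype μ] (X : Matrix (α × β × μ) (α × β × μ) ℂ) :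
    Matrix (α × β) (α × β) ℂ :=
  fun p q => ∑ m, X (p.1, p.2, m) (q.1, q.2, m)

/-- Partial trace over the second tensor factor. -/
noncomputable def ptrace2 {ι κ : Type*} [Fintype κ] (X : Matrix (ι × κ) (ι × κ) ℂ) : Matrix ι ι ℂ :=
  fun i j => ∑ k, X (i, k) (j, k)

/-- Partial trace over `B` and `M`. -/
noncomputable def ptraceBM {α β μ : Type*} [Fintype β] [Fintype μ] (X : Matrix (α × β × μ) (α × β × μ) ℂ) :
    Matrix α α ℂ :=
  fun a a' => ∑ b, ∑ m, X (a, b, m) (a', b, m)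

set_option linter.unusedSectionVars false

section H
variable {ι κ : Type} [Fintype ι] [DecidableEq ι] [Fintype κ] [DecidableEq κ]

lemma kraus_density {N : ℕ} (K : Fin N → Matrix κ ι ℂ) (hK : ∑ i, (K i)ᴴ * K i = 1)
    {ρ : Matrix ι ι ℂ} (hρ : IsDensity ρ) : IsDensity (∑ i, K i * ρ * (K i)ᴴ) := by
  constructor
  · exact Finset.sum_induction _ _ (fun a b ha hb => ha.add hb) .zero
      (fun i _ => hρ.1.mul_mul_conjTranspose_same (K i))
  · have h1 : ∀ i : Fin N, (K i * ρ * (K i)ᴴ).trace = ((K i)ᴴ * K i * ρ).trace := by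
      intro i
      rw [Matrix.trace_mul_cycle, Matrix.mul_assoc]
    rw [Matrix.trace_sum]
    simp_rw [h1]
    rw [← Matrix.trace_sum, ← Finset.sum_mul, hK, Matrix.one_mul, hρ.2]

lemma exists_density [Nonempty ι] : ∃ ρ : Matrix ι ι ℂ, IsDensity ρ := by
  obtain ⟨i⟩ := ‹Nonempty ι›
  refine ⟨fun a b => if a = i ∧ b = i then 1 else 0, Matrix.PosSemidef.of_dotProduct_mulVec_nonneg ?_ ?_, ?_⟩
  · unfold Matrix.IsHermitian
    ext a b
    show star ((fun a b => if a = i ∧ b = i then (1:ℂ) else 0) b a) = _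
    simp [apply_ite (star : ℂ → ℂ), and_comm]
  · intro x
    have hmv : Matrix.mulVec (fun a b => if a = i ∧ b = i then (1:ℂ) else 0) x
        = fun a => if a = i then x i else 0 := by
      funext a
      simp [Matrix.mulVec, dotProduct, ite_and]
    rw [hmv]
    have : (dotProduct (star x) fun a => if a = i then x i else 0)
        = star (x i) * x i := by
      simp [dotProduct, mul_ite]
    rw [this]
    exact star_mul_self_nonneg _
  · have : Matrix.trace (fun a b => if a = i ∧ b = i then (1:ℂ) else 0)
        = ∑ a, if a = i ∧ a = i then (1:ℂ) else 0 := rfl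
    rw [this]
    simp

lemma density_eq_of_subsingleton (hsub : ∀ a b : ι, a = b) {ρ : Matrix ι ι ℂ}
    (hρ : IsDensity ρ) (a0 : ι) : ρ = fun _ _ => 1 := by
  have hcard : ∀ x : ι, x = a0 := fun x => hsub x a0
  have htr : ρ.trace = ∑ x, ρ x x := rfl
  have h1 : (Finset.univ : Finset ι) = {a0} := by
    ext x; simp [hcard x]
  have : ρ a0 a0 = 1 := by
    have := hρ.2
    rw [htr, h1] at this
    simpa using this
  funext x y
  rw [hcard x, hcard y, this]

open scoped MatrixOrder in
lemma d_bound
    (d : ∀ (ι : Type) [Fintype ι] [DecidableEq ι], Matrix ι ι ℂ → Matrix ι ι ℂ → ℝ)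
    (hd : ∀ (ι κ : Type) [Fintype ι] [DecidableEq ι] [Fintype κ] [DecidableEq κ]
      (N : ℕ) (K : Fin N → Matrix κ ι ℂ), (∑ i, (K i)ᴴ * K i = 1) →
      ∀ ρ σ : Matrix ι ι ℂ,
        d κ (∑ i, K i * ρ * (K i)ᴴ) (∑ i, K i * σ * (K i)ᴴ) ≤ d ι ρ σ)
    (ι : Type) [Fintype ι] [DecidableEq ι] [Nonempty ι] :
    ∃ C, ∀ ρ σ : Matrix ι ι ℂ, IsDensity ρ → IsDensity σ → d ι ρ σ ≤ C := by
  by_cases hsub : ∀ a b : ι, a = b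
  · obtain ⟨a0⟩ := ‹Nonempty ι›
    refine ⟨d ι (fun _ _ => 1) (fun _ _ => 1), fun ρ σ hρ hσ => ?_⟩
    rw [density_eq_of_subsingleton hsub hρ a0, density_eq_of_subsingleton hsub hσ a0]
  · push_neg at hsub
    obtain ⟨i, j, hij⟩ := hsub
    set Eii : Matrix ι ι ℂ := fun a b => if a = i ∧ b = i then 1 else 0 with hEii
    set Ejj : Matrix ι ι ℂ := fun a b => if a = j ∧ b = j then 1 else 0 with hEjj
    refine ⟨d ι Eii Ejj, fun ρ σ hρ hσ => ?_⟩
    -- the measure-and-prepare channel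
    set S : ι → Matrix ι ι ℂ := fun b => if b = i then CFC.sqrt ρ else CFC.sqrt σ with hS
    have hSh : ∀ b, (S b)ᴴ = S b := by
      intro b
      by_cases hb : b = i <;>
        simp [hS, hb, Matrix.IsHermitian.eq, (CFC.sqrt_nonneg ρ).posSemidef.1, (CFC.sqrt_nonneg σ).posSemidef.1]
    have hSS : ∀ b, S b * S b = if b = i then ρ else σ := by
      intro b
      by_cases hb : b = i <;> simp [hS, hb, CFC.sqrt_mul_sqrt_self ρ hρ.1.nonneg, CFC.sqrt_mul_sqrt_self σ hσ.1.nonneg]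
    have hSStr : ∀ b, (S b * S b).trace = 1 := by
      intro b
      rw [hSS b]
      by_cases hb : b = i <;> simp [hb, hρ.2, hσ.2]
    set K : ι × ι → Matrix ι ι ℂ := fun cb => Matrix.of fun x y => if y = cb.2 then S cb.2 x cb.1 else 0 with hK
    set N := Fintype.card (ι × ι) with hN
    set e : Fin N ≃ ι × ι := (Fintype.equivFin (ι × ι)).symm with he
    set K' : Fin N → Matrix ι ι ℂ := fun n => K (e n) with hK'
    have hnorm : ∑ n, (K' n)ᴴ * K' n = 1 := by
      rw [show (∑ n, (K' n)ᴴ * K' n) = ∑ p : ι × ι, (K p)ᴴ * K p from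
        Equiv.sum_comp e (fun p => (K p)ᴴ * K p)]
      ext x y
      simp only [Matrix.sum_apply, Matrix.mul_apply, Matrix.conjTranspose_apply, hK, Matrix.of_apply]
      simp only [apply_ite (star : ℂ → ℂ), star_zero, ite_mul, zero_mul, mul_ite, mul_zero]
      rw [Fintype.sum_prod_type]
      simp only [Finset.sum_ite_irrel, Finset.sum_const_zero, Finset.sum_ite_eq,
        Finset.mem_univ, if_true]
      rw [Matrix.one_apply]
      by_cases hxy : x = y
      · subst hxy
        simp only [if_pos rfl]
        have htr : ∑ c : ι, ∑ z : ι, star (S x z c) * S x z c = ((S x)ᴴ * (S x)).trace := by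
          have : ((S x)ᴴ * (S x)).trace = ∑ c, ∑ z, (S x)ᴴ c z * S x z c := by
            simp [Matrix.trace, Matrix.diag, Matrix.mul_apply]
          rw [this]
          simp [Matrix.conjTranspose_apply]
        rw [htr, hSh, hSStr]
      · simp [hxy]
    have hout : ∀ b0 : ι,
        (∑ n, K' n * Matrix.of (fun a b => if a = b0 ∧ b = b0 then (1:ℂ) else 0) * (K' n)ᴴ)
          = S b0 * S b0 := by
      intro b0
      rw [show (∑ n, K' n * Matrix.of (fun a b => if a = b0 ∧ b = b0 then (1:ℂ) else 0) * (K' n)ᴴ)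
          = ∑ p : ι × ι, K p * Matrix.of (fun a b => if a = b0 ∧ b = b0 then (1:ℂ) else 0) * (K p)ᴴ from
        Equiv.sum_comp e (fun p => K p * Matrix.of (fun a b => if a = b0 ∧ b = b0 then (1:ℂ) else 0) * (K p)ᴴ)]
      ext x y
      simp only [Matrix.sum_apply, Matrix.mul_apply, Matrix.conjTranspose_apply, hK, Matrix.of_apply]
      simp only [apply_ite (star : ℂ → ℂ), star_zero, ite_mul, zero_mul, mul_ite, mul_zero,
        ite_and]
      rw [Fintype.sum_prod_type]
      simp only [Finset.sum_ite_irrel, Finset.sum_const_zero, Finset.sum_ite_eq,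
        Finset.sum_ite_eq', Finset.mem_univ, if_true]
      simp only [Matrix.of_apply, mul_ite, mul_zero, mul_one, ite_mul, zero_mul]
      simp only [Finset.sum_ite_eq, Finset.sum_ite_eq', Finset.mem_univ, if_true]
      refine Finset.sum_congr rfl fun c _ => ?_
      have hstar : star (S b0 y c) = S b0 c y := by
        rw [← Matrix.conjTranspose_apply, hSh]
      rw [hstar]
    have hρ' : ∑ n, K' n * Eii * (K' n)ᴴ = ρ := by
      rw [show Eii = Matrix.of (fun a b => if a = i ∧ b = i then (1:ℂ) else 0) from rfl] at *
      rw [hout i, hSS i, if_pos rfl]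
    have hσ' : ∑ n, K' n * Ejj * (K' n)ᴴ = σ := by
      rw [show Ejj = Matrix.of (fun a b => if a = j ∧ b = j then (1:ℂ) else 0) from rfl] at *
      rw [hout j, hSS j, if_neg (fun h => hij h.symm)]
    have := hd ι ι N K' hnorm Eii Ejj
    rw [hρ', hσ'] at this
    exact this

section Ext
variable {α β μ : Type} [Fintype α] [DecidableEq α] [Fintype β] [DecidableEq β]
  [Fintype μ] [DecidableEq μ]

/-- Kraus operator of `ExtAM`. -/
def MAM (β : Type) [DecidableEq β] (K : Matrix (α × μ) (α × μ) ℂ) :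
    Matrix (α × β × μ) (α × β × μ) ℂ :=
  Matrix.of fun x y => if x.2.1 = y.2.1 then K (x.1, x.2.2) (y.1, y.2.2) else 0

lemma ExtAM_eq {N : ℕ} (K : Fin N → Matrix (α × μ) (α × μ) ℂ)
    (Λ : Matrix (α × μ) (α × μ) ℂ → Matrix (α × μ) (α × μ) ℂ)
    (hrep : ∀ ρ, Λ ρ = ∑ i, K i * ρ * (K i)ᴴ) (ρ : Matrix (α × β × μ) (α × β × μ) ℂ) :
    ExtAM (β := β) Λ ρ = ∑ i, MAM β (K i) * ρ * (MAM β (K i))ᴴ := by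
  funext x y
  have h := congrFun (congrFun
    (hrep (Matrix.of fun p q => ρ (p.1, x.2.1, p.2) (q.1, y.2.1, q.2))) (x.1, x.2.2)) (y.1, y.2.2)
  show Λ (Matrix.of fun p q => ρ (p.1, x.2.1, p.2) (q.1, y.2.1, q.2)) (x.1, x.2.2) (y.1, y.2.2) = _
  rw [h]
  simp only [Matrix.sum_apply, Matrix.mul_apply, Matrix.conjTranspose_apply, MAM,
    Matrix.of_apply]
  refine Finset.sum_congr rfl fun n _ => ?_
  simp only [apply_ite (star : ℂ → ℂ), star_zero, ite_mul, zero_mul, mul_ite, mul_zero]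
  simp only [Fintype.sum_prod_type, Finset.sum_ite_irrel, Finset.sum_const_zero,
    Finset.sum_ite_eq, Finset.sum_ite_eq', Finset.mem_univ, if_true, Finset.sum_mul,
    Finset.mul_sum]

lemma MAM_norm {N : ℕ} (K : Fin N → Matrix (α × μ) (α × μ) ℂ)
    (hK : ∑ i, (K i)ᴴ * K i = 1) :
    ∑ i, (MAM (α := α) (μ := μ) β (K i))ᴴ * MAM β (K i) = 1 := by
  ext x y
  have h1 := congrFun (congrFun hK (x.1, x.2.2)) (y.1, y.2.2)
  simp only [Matrix.sum_apply, Matrix.mul_apply, Matrix.conjTranspose_apply, MAM,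
    Matrix.of_apply] at h1 ⊢
  simp only [apply_ite (star : ℂ → ℂ), star_zero, ite_mul, zero_mul, mul_ite, mul_zero]
  simp only [Fintype.sum_prod_type, Finset.sum_ite_irrel, Finset.sum_const_zero,
    Finset.sum_ite_eq, Finset.sum_ite_eq', Finset.mem_univ, if_true]
  simp only [Fintype.sum_prod_type] at h1
  by_cases hbm : y.2.1 = x.2.1
  · rw [if_pos hbm, h1]
    simp only [Matrix.one_apply, Prod.ext_iff]
    have : x.2.1 = y.2.1 := hbm.symm
    by_cases h1' : x.1 = y.1 <;> by_cases h2' : x.2.2 = y.2.2 <;> simp [h1', h2', this]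
  · rw [if_neg hbm]
    have : ¬ x = y := fun h => hbm (by rw [h])
    simp [Matrix.one_apply, this]

lemma ExtBM_eq {N : ℕ} (L : Fin N → Matrix (β × μ) (β × μ) ℂ)
    (Λ : Matrix (β × μ) (β × μ) ℂ → Matrix (β × μ) (β × μ) ℂ)
    (hrep : ∀ ρ, Λ ρ = ∑ i, L i * ρ * (L i)ᴴ) (ρ : Matrix (α × β × μ) (α × β × μ) ℂ) :
    ExtBM Λ ρ = ∑ i, ((1 : Matrix α α ℂ) ⊗ₖ L i) * ρ * ((1 : Matrix α α ℂ) ⊗ₖ L i)ᴴ := by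
  funext x y
  have h := congrFun (congrFun (hrep (Matrix.of fun p q => ρ (x.1, p) (y.1, q))) x.2) y.2
  show Λ (Matrix.of fun p q => ρ (x.1, p) (y.1, q)) x.2 y.2 = _
  rw [h]
  simp only [Matrix.sum_apply, Matrix.mul_apply, Matrix.conjTranspose_apply,
    Matrix.kroneckerMap_apply, Matrix.one_apply, Matrix.of_apply]
  refine Finset.sum_congr rfl fun n _ => ?_
  simp only [apply_ite (star : ℂ → ℂ), star_zero, ite_mul, zero_mul, mul_ite, mul_zero,
    star_one, one_mul]
  simp only [Fintype.sum_prod_type, Finset.sum_ite_irrel, Finset.sum_const_zero,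
    Finset.sum_ite_eq, Finset.sum_ite_eq', Finset.mem_univ, if_true, Finset.sum_mul,
    Finset.mul_sum]

lemma kron_norm {N : ℕ} (L : Fin N → Matrix (β × μ) (β × μ) ℂ)
    (hL : ∑ i, (L i)ᴴ * L i = 1) :
    ∑ i, ((1 : Matrix α α ℂ) ⊗ₖ L i)ᴴ * ((1 : Matrix α α ℂ) ⊗ₖ L i) = 1 := by
  ext x y
  have h1 := congrFun (congrFun hL x.2) y.2
  simp only [Matrix.sum_apply, Matrix.mul_apply, Matrix.conjTranspose_apply,
    Matrix.kroneckerMap_apply, Matrix.one_apply] at h1 ⊢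
  simp only [apply_ite (star : ℂ → ℂ), star_zero, star_one, ite_mul, zero_mul, one_mul,
    mul_ite, mul_zero]
  simp only [Fintype.sum_prod_type, Finset.sum_ite_irrel, Finset.sum_const_zero,
    Finset.sum_ite_eq, Finset.sum_ite_eq', Finset.mem_univ, if_true]
  simp only [Fintype.sum_prod_type] at h1
  rw [h1]
  by_cases ha : x.1 = y.1 <;> by_cases hb : x.2 = y.2 <;>
    simp [ha, hb, Prod.ext_iff, eq_comm]

lemma ExtAM_prod {N : ℕ} (K : Fin N → Matrix (α × μ) (α × μ) ℂ)
    (Λ : Matrix (α × μ) (α × μ) ℂ → Matrix (α × μ) (α × μ) ℂ)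
    (hrep : ∀ ρ, Λ ρ = ∑ i, K i * ρ * (K i)ᴴ)
    (σAM : Matrix (α × μ) (α × μ) ℂ) (σB : Matrix β β ℂ) :
    ExtAM (β := β) Λ (prodAMB σAM σB) = prodAMB (Λ σAM) σB := by
  funext x y
  show Λ (fun p q => σAM p q * σB x.2.1 y.2.1) (x.1, x.2.2) (y.1, y.2.2) = _
  have hfun : (fun p q => σAM p q * σB x.2.1 y.2.1) = σB x.2.1 y.2.1 • σAM := by
    funext p q
    simp [Matrix.smul_apply, mul_comm, smul_eq_mul]
  rw [hfun, hrep, hrep]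
  show (∑ i, K i * (σB x.2.1 y.2.1 • σAM) * (K i)ᴴ) (x.1, x.2.2) (y.1, y.2.2) = _
  simp only [Matrix.mul_smul, Matrix.smul_mul, ← Finset.smul_sum]
  show (σB x.2.1 y.2.1 • (∑ i, K i * σAM * (K i)ᴴ)) (x.1, x.2.2) (y.1, y.2.2) = _
  rw [Matrix.smul_apply]
  show _ = (∑ i, K i * σAM * (K i)ᴴ) (x.1, x.2.2) (y.1, y.2.2) * σB x.2.1 y.2.1
  rw [smul_eq_mul, mul_comm]

/-- the swap Kraus operator -/
def SwapOp (β μ : Type) [DecidableEq β] [DecidableEq μ] : Matrix (β × μ) (μ × β) ℂ :=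
  Matrix.of fun p q => if p.1 = q.2 ∧ p.2 = q.1 then 1 else 0

lemma swap_norm : (SwapOp β μ)ᴴ * SwapOp β μ = 1 := by
  ext x y
  simp only [Matrix.mul_apply, Matrix.conjTranspose_apply, SwapOp, Matrix.of_apply,
    Matrix.one_apply]
  simp only [apply_ite (star : ℂ → ℂ), star_zero, star_one, ite_mul, zero_mul, one_mul,
    ite_and]
  simp only [Fintype.sum_prod_type, Finset.sum_ite_irrel, Finset.sum_const_zero,
    Finset.sum_ite_eq, Finset.sum_ite_eq', Finset.mem_univ, if_true]
  by_cases h1 : x.1 = y.1 <;> by_cases h2 : x.2 = y.2 <;> simp [h1, h2, Prod.ext_iff]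

lemma swap_conj (σAM : Matrix (α × μ) (α × μ) ℂ) (σB : Matrix β β ℂ) :
    (∑ _i : Fin 1, ((1 : Matrix α α ℂ) ⊗ₖ SwapOp β μ) *
        (Matrix.of fun (x y : α × μ × β) => σAM (x.1, x.2.1) (y.1, y.2.1) * σB x.2.2 y.2.2) *
        ((1 : Matrix α α ℂ) ⊗ₖ SwapOp β μ)ᴴ)
      = prodAMB σAM σB := by
  ext x y
  simp only [Matrix.sum_apply, Finset.sum_const, Finset.card_univ, Fintype.card_fin, one_smul,
    Matrix.mul_apply, Matrix.conjTranspose_apply, Matrix.kroneckerMap_apply, Matrix.one_apply,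
    SwapOp, Matrix.of_apply, prodAMB]
  simp only [apply_ite (star : ℂ → ℂ), star_zero, star_one, ite_mul, zero_mul, one_mul,
    mul_ite, mul_zero, mul_one, ite_and]
  simp only [Fintype.sum_prod_type, Finset.sum_ite_irrel, Finset.sum_const_zero,
    Finset.sum_ite_eq, Finset.sum_ite_eq', Finset.mem_univ, if_true]

end Ext

end H

/-- Under the hypotheses of the decomposability bound, for any CPTP map `Λ`
on `A ⊗ B ⊗ M` and state `ρ₀` with `Q_{A:MB}(Λ ρ₀) ≥ B(ρ₀)`, the degree of
non-decomposability `ND(Λ) = inf_{λ decomposable} sup_σ d(Λ σ, λ σ)` satisfies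
`ND(Λ) ≥ g⁻¹( Q_{A:MB}(Λ ρ₀) − B(ρ₀) )`, where
`B(ρ₀) = sup_{σ_AM} Q_{A:M}(σ_AM) + I_{AM:B}(ρ₀)`. -/
theorem nondecomposability_lower_bound
    {α β μ : Type} [Fintype α] [DecidableEq α] [Fintype β] [DecidableEq β]
    [Fintype μ] [DecidableEq μ]
    (Q : ∀ (γ δ : Type) [Fintype γ] [DecidableEq γ] [Fintype δ] [DecidableEq δ],
      Matrix (γ × δ) (γ × δ) ℂ → ℝ)
    (d : ∀ (ι : Type) [Fintype ι] [DecidableEq ι], Matrix ι ι ℂ → Matrix ι ι ℂ → ℝ)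
    (g g' : ℝ → ℝ) (hg : Monotone g) (hg0 : g 0 = 0)
    (hgg' : ∀ x, g' (g x) = x) (hg'g : ∀ x, g (g' x) = x)
    -- the distance is contractive under CPTP maps
    (hd : ∀ (ι κ : Type) [Fintype ι] [DecidableEq ι] [Fintype κ] [DecidableEq κ]
      (N : ℕ) (K : Fin N → Matrix κ ι ℂ), (∑ i, (K i)ᴴ * K i = 1) →
      ∀ ρ σ : Matrix ι ι ℂ,
        d κ (∑ i, K i * ρ * (K i)ᴴ) (∑ i, K i * σ * (K i)ᴴ) ≤ d ι ρ σ)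
    -- gd-continuity of Q
    (hQc : ∀ (γ δ : Type) [Fintype γ] [DecidableEq γ] [Fintype δ] [DecidableEq δ]
      (ρ σ : Matrix (γ × δ) (γ × δ) ℂ), |Q γ δ ρ - Q γ δ σ| ≤ g (d (γ × δ) ρ σ))
    -- monotonicity under CPTP maps on the first subsystem
    (hmonoL : ∀ (γ γ' δ : Type) [Fintype γ] [DecidableEq γ] [Fintype γ'] [DecidableEq γ']
      [Fintype δ] [DecidableEq δ] (N : ℕ) (K : Fin N → Matrix γ' γ ℂ),
      (∑ i, (K i)ᴴ * K i = 1) → ∀ ρ : Matrix (γ × δ) (γ × δ) ℂ,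
        Q γ' δ (∑ i, (K i ⊗ₖ (1 : Matrix δ δ ℂ)) * ρ * (K i ⊗ₖ (1 : Matrix δ δ ℂ))ᴴ) ≤ Q γ δ ρ)
    -- monotonicity under CPTP maps on the second subsystem
    (hmonoR : ∀ (γ δ δ' : Type) [Fintype γ] [DecidableEq γ] [Fintype δ] [DecidableEq δ]
      [Fintype δ'] [DecidableEq δ'] (N : ℕ) (K : Fin N → Matrix δ' δ ℂ),
      (∑ i, (K i)ᴴ * K i = 1) → ∀ ρ : Matrix (γ × δ) (γ × δ) ℂ,
        Q γ δ' (∑ i, ((1 : Matrix γ γ ℂ) ⊗ₖ K i) * ρ * ((1 : Matrix γ γ ℂ) ⊗ₖ K i)ᴴ) ≤ Q γ δ ρ)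
    -- invariance under appending an uncorrelated ancilla to the second subsystem
    (hanc : ∀ (γ δ ε : Type) [Fintype γ] [DecidableEq γ] [Fintype δ] [DecidableEq δ]
      [Fintype ε] [DecidableEq ε] (ρ : Matrix (γ × δ) (γ × δ) ℂ) (σ : Matrix ε ε ℂ),
      IsDensity σ →
        Q γ (δ × ε) (fun x y => ρ (x.1, x.2.1) (y.1, y.2.1) * σ x.2.2 y.2.2) = Q γ δ ρ)
    (Λ : Matrix (α × β × μ) (α × β × μ) ℂ → Matrix (α × β × μ) (α × β × μ) ℂ)
    (hΛ : IsCPTP Λ)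
    (ρ₀ : Matrix (α × β × μ) (α × β × μ) ℂ) (hρ₀ : IsDensity ρ₀)
    (B : ℝ)
    (hB : B = sSup {x : ℝ | ∃ σ : Matrix (α × μ) (α × μ) ℂ, IsDensity σ ∧ x = Q α μ σ} +
        sInf {x : ℝ | ∃ (σAM : Matrix (α × μ) (α × μ) ℂ) (σB : Matrix β β ℂ),
          IsDensity σAM ∧ IsDensity σB ∧ x = g (d (α × β × μ) ρ₀ (prodAMB σAM σB))})
    (hviol : B ≤ Q α (β × μ) (Λ ρ₀)) :
    g' (Q α (β × μ) (Λ ρ₀) - B) ≤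
      sInf {x : ℝ | ∃ (ΛAM : Matrix (α × μ) (α × μ) ℂ → Matrix (α × μ) (α × μ) ℂ)
        (ΛBM : Matrix (β × μ) (β × μ) ℂ → Matrix (β × μ) (β × μ) ℂ),
        IsCPTP ΛAM ∧ IsCPTP ΛBM ∧
        x = sSup {y : ℝ | ∃ σ : Matrix (α × β × μ) (α × β × μ) ℂ, IsDensity σ ∧
          y = d (α × β × μ) (Λ σ) (ExtBM (β := β) ΛBM (ExtAM (β := β) ΛAM σ))}} := by
  classical
  -- all index types are nonempty, since a density matrix exists
  have hne : Nonempty (α × β × μ) := by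
    by_contra h
    rw [not_nonempty_iff] at h
    have h0 : ρ₀.trace = 0 := by
      rw [show ρ₀.trace = ∑ x, ρ₀ x x from rfl]
      simp
    rw [hρ₀.2] at h0
    exact one_ne_zero h0
  obtain ⟨⟨a0, b0, m0⟩⟩ := hne
  have hαμ : Nonempty (α × μ) := ⟨(a0, m0)⟩
  have hβ : Nonempty β := ⟨b0⟩
  have hαβμ : Nonempty (α × β × μ) := ⟨(a0, b0, m0)⟩
  -- g' is monotone
  have hg'mono : Monotone g' := by
    intro a b hab
    by_contra hcon
    push_neg at hcon
    have h2 : b ≤ a := by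
      have := hg hcon.le
      rwa [hg'g, hg'g] at this
    have hab' : a = b := le_antisymm hab h2
    rw [hab'] at hcon
    exact lt_irrefl _ hcon
  -- uniform bounds on the distance between density matrices
  obtain ⟨C1, hC1⟩ := d_bound d hd (α × β × μ)
  obtain ⟨C2, hC2⟩ := d_bound d hd (α × μ)
  -- the set {Q α μ σ} is bounded above
  obtain ⟨τ0, hτ0⟩ := exists_density (ι := α × μ)
  have hQbdd : BddAbove {x : ℝ | ∃ σ : Matrix (α × μ) (α × μ) ℂ, IsDensity σ ∧ x = Q α μ σ} := by
    refine ⟨Q α μ τ0 + g C2, ?_⟩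
    rintro x ⟨σ, hσ, rfl⟩
    have h1 := hQc α μ σ τ0
    have h2 : g (d (α × μ) σ τ0) ≤ g C2 := hg (hC2 σ τ0 hσ hτ0)
    have h3 := (abs_le.mp h1).2
    linarith [(abs_le.mp h1).1]
  refine le_csInf ?_ ?_
  · -- the set of decomposable maps is nonempty (take identities)
    refine ⟨_, id, id, ⟨1, fun _ => 1, ?_, ?_⟩, ⟨1, fun _ => 1, ?_, ?_⟩, rfl⟩
    · intro ρ; simp
    · simp
    · intro ρ; simp
    · simp
  rintro x ⟨ΛAM, ΛBM, ⟨NA, KA, hKA, hKAn⟩, ⟨NB, KB, hKB, hKBn⟩, rfl⟩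
  set lf : Matrix (α × β × μ) (α × β × μ) ℂ → Matrix (α × β × μ) (α × β × μ) ℂ :=
    fun σ => ExtBM (β := β) ΛBM (ExtAM (β := β) ΛAM σ) with hlf
  have hAMrep : ∀ ρ : Matrix (α × β × μ) (α × β × μ) ℂ,
      ExtAM (β := β) ΛAM ρ = ∑ i, MAM β (KA i) * ρ * (MAM β (KA i))ᴴ :=
    fun ρ => ExtAM_eq KA ΛAM hKA ρ
  have hBMrep : ∀ ρ : Matrix (α × β × μ) (α × β × μ) ℂ,
      ExtBM (β := β) ΛBM ρ = ∑ i, ((1 : Matrix α α ℂ) ⊗ₖ KB i) * ρ *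
        ((1 : Matrix α α ℂ) ⊗ₖ KB i)ᴴ :=
    fun ρ => ExtBM_eq KB ΛBM hKB ρ
  -- lf is contractive w.r.t. d
  have hcontract : ∀ ρ σ : Matrix (α × β × μ) (α × β × μ) ℂ,
      d (α × β × μ) (lf ρ) (lf σ) ≤ d (α × β × μ) ρ σ := by
    intro ρ σ
    have step1 : d (α × β × μ) (lf ρ) (lf σ)
        ≤ d (α × β × μ) (ExtAM (β := β) ΛAM ρ) (ExtAM (β := β) ΛAM σ) := by
      rw [hlf]
      simp only
      rw [hBMrep, hBMrep]
      exact hd (α × β × μ) (α × β × μ) NB (fun i => (1 : Matrix α α ℂ) ⊗ₖ KB i)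
        (kron_norm KB hKBn) _ _
    have step2 : d (α × β × μ) (ExtAM (β := β) ΛAM ρ) (ExtAM (β := β) ΛAM σ)
        ≤ d (α × β × μ) ρ σ := by
      rw [hAMrep, hAMrep]
      exact hd (α × β × μ) (α × β × μ) NA (fun i => MAM β (KA i)) (MAM_norm KA hKAn) _ _
    linarith
  -- lf maps densities to densities
  have hlfdens : ∀ σ : Matrix (α × β × μ) (α × β × μ) ℂ, IsDensity σ → IsDensity (lf σ) := by
    intro σ hσ
    have h1 : IsDensity (ExtAM (β := β) ΛAM σ) := by
      rw [hAMrep]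
      exact kraus_density _ (MAM_norm KA hKAn) hσ
    rw [hlf]
    simp only
    rw [hBMrep]
    exact kraus_density _ (kron_norm KB hKBn) h1
  have hΛdens : IsDensity (Λ ρ₀) := by
    obtain ⟨N, K, hKrep, hKn⟩ := hΛ
    rw [hKrep]
    exact kraus_density K hKn hρ₀
  set c : ℝ := d (α × β × μ) (Λ ρ₀) (lf ρ₀) with hc
  -- c is at most the sup in the definition of the non-decomposability degree
  have hcle : c ≤ sSup {y : ℝ | ∃ σ : Matrix (α × β × μ) (α × β × μ) ℂ, IsDensity σ ∧
      y = d (α × β × μ) (Λ σ) (ExtBM (β := β) ΛBM (ExtAM (β := β) ΛAM σ))} := by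
    refine le_csSup ⟨C1, ?_⟩ ⟨ρ₀, hρ₀, rfl⟩
    rintro y ⟨σ, hσ, rfl⟩
    have h1 : IsDensity (Λ σ) := by
      obtain ⟨N, K, hKrep, hKn⟩ := hΛ
      rw [hKrep]
      exact kraus_density K hKn hσ
    exact hC1 _ _ h1 (hlfdens σ hσ)
  -- decomposability bound : Q (lf ρ₀) ≤ B
  have hQlfB : Q α (β × μ) (lf ρ₀) ≤ B := by
    set S : ℝ := sSup {x : ℝ | ∃ σ : Matrix (α × μ) (α × μ) ℂ, IsDensity σ ∧ x = Q α μ σ}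
      with hSdef
    have key : ∀ (σAM : Matrix (α × μ) (α × μ) ℂ) (σB : Matrix β β ℂ),
        IsDensity σAM → IsDensity σB →
        Q α (β × μ) (lf ρ₀) ≤ S + g (d (α × β × μ) ρ₀ (prodAMB σAM σB)) := by
      intro σAM σB hσAM hσB
      set π := prodAMB σAM σB with hπ
      have h1 := hQc α (β × μ) (lf ρ₀) (lf π)
      have h2 : g (d (α × β × μ) (lf ρ₀) (lf π)) ≤ g (d (α × β × μ) ρ₀ π) :=
        hg (hcontract ρ₀ π)
      -- Q (lf π) ≤ S
      set σ' := ΛAM σAM with hσ'def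
      have hσ' : IsDensity σ' := by
        rw [hσ'def, hKA]
        exact kraus_density KA hKAn hσAM
      have hlfπ : lf π = ExtBM (β := β) ΛBM (prodAMB σ' σB) := by
        rw [hlf]
        simp only
        rw [hπ, ExtAM_prod KA ΛAM hKA σAM σB]
      have h3a : Q α (β × μ) (lf π) ≤ Q α (β × μ) (prodAMB σ' σB) := by
        rw [hlfπ, hBMrep]
        exact hmonoR α (β × μ) (β × μ) NB KB hKBn (prodAMB σ' σB)
      have h3b : Q α (β × μ) (prodAMB σ' σB) ≤
          Q α (μ × β) (Matrix.of fun (x y : α × μ × β) =>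
            σ' (x.1, x.2.1) (y.1, y.2.1) * σB x.2.2 y.2.2) := by
        have hmono := hmonoR α (μ × β) (β × μ) 1 (fun _ => SwapOp β μ)
          (by rw [Fin.sum_univ_one]; exact swap_norm)
          (Matrix.of fun (x y : α × μ × β) =>
            σ' (x.1, x.2.1) (y.1, y.2.1) * σB x.2.2 y.2.2)
        rwa [swap_conj σ' σB] at hmono
      have h3c : Q α (μ × β) (Matrix.of fun (x y : α × μ × β) =>
          σ' (x.1, x.2.1) (y.1, y.2.1) * σB x.2.2 y.2.2) = Q α μ σ' :=
        hanc α μ β σ' σB hσB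
      have h3d : Q α μ σ' ≤ S := le_csSup hQbdd ⟨σ', hσ', rfl⟩
      have habs := (abs_le.mp h1).2
      linarith [(abs_le.mp h1).1]
    have hIne : {x : ℝ | ∃ (σAM : Matrix (α × μ) (α × μ) ℂ) (σB : Matrix β β ℂ),
        IsDensity σAM ∧ IsDensity σB ∧
        x = g (d (α × β × μ) ρ₀ (prodAMB σAM σB))}.Nonempty := by
      obtain ⟨σAM, hσAM⟩ := exists_density (ι := α × μ)
      obtain ⟨σB, hσB⟩ := exists_density (ι := β)
      exact ⟨_, σAM, σB, hσAM, hσB, rfl⟩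
    have hle : Q α (β × μ) (lf ρ₀) - S ≤ sInf {x : ℝ | ∃ (σAM : Matrix (α × μ) (α × μ) ℂ)
        (σB : Matrix β β ℂ), IsDensity σAM ∧ IsDensity σB ∧
        x = g (d (α × β × μ) ρ₀ (prodAMB σAM σB))} := by
      refine le_csInf hIne ?_
      rintro b ⟨σAM, σB, hσAM, hσB, rfl⟩
      linarith [key σAM σB hσAM hσB]
    rw [hB]
    linarith
  -- final chain
  have hmain : Q α (β × μ) (Λ ρ₀) ≤ B + g c := by
    have h1 := hQc α (β × μ) (Λ ρ₀) (lf ρ₀)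
    have habs := (abs_le.mp h1).2
    linarith [(abs_le.mp h1).1]
  have hfin : g' (Q α (β × μ) (Λ ρ₀) - B) ≤ c := by
    have := hg'mono (show Q α (β × μ) (Λ ρ₀) - B ≤ g c by linarith)
    rwa [hgg'] at this
  linarith


end Stmt12
end

section
/- The two-qubit SWAP channel has no decomposable m-dilation for any m: there do not exist a finite-dimensional mediator Hilbert space H_M, a state σ_M on H_M, and CPTP maps Λ_{AM} (acting trivially on B) and Λ_{BM} (acting trivially on A) such that SWAP(ρ_{AB}) = Tr_M[Λ_{BM} ∘ Λ_{AM}(ρ_{AB} ⊗ σ_M)] for all two-qubit states ρ_{AB}. -/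
open Matrix
open scoped ComplexOrder

namespace Stmt15

/-- A density matrix: positive semidefinite with unit trace. -/
def IsDensity {ι : Type*} [Fintype ι] (ρ : Matrix ι ι ℂ) : Prop :=
  ρ.PosSemidef ∧ ρ.trace = 1

/-- A completely positive trace-preserving map, presented by a Kraus decomposition
(equivalent to CPTP in finite dimensions). -/
def IsCPTP {ι κ : Type*} [Fintype ι] [DecidableEq ι] [Fintype κ] [DecidableEq κ]
    (Φ : Matrix ι ι ℂ → Matrix κ κ ℂ) : Prop :=
  ∃ (N : ℕ) (K : Fin N → Matrix κ ι ℂ),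
    (∀ ρ, Φ ρ = ∑ i, K i * ρ * (K i)ᴴ) ∧ ∑ i, (K i)ᴴ * K i = 1

/-- The extension `Λ' ⊗ id_B` of a map `Λ'` on `A ⊗ M` to the tripartite space
`A ⊗ B ⊗ M` (indices ordered as `A × (B × M)`), acting trivially on `B`. -/
def ExtAM {α β μ : Type*} (Λ : Matrix (α × μ) (α × μ) ℂ → Matrix (α × μ) (α × μ) ℂ) :
    Matrix (α × β × μ) (α × β × μ) ℂ → Matrix (α × β × μ) (α × β × μ) ℂ :=
  fun ρ x y => Λ (fun p q => ρ (p.1, x.2.1, p.2) (q.1, y.2.1, q.2)) (x.1, x.2.2) (y.1, y.2.2)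

/-- The extension `id_A ⊗ Λ'` of a map `Λ'` on `B ⊗ M` to the tripartite space,
acting trivially on `A`. -/
def ExtBM {α β μ : Type*} (Λ : Matrix (β × μ) (β × μ) ℂ → Matrix (β × μ) (β × μ) ℂ) :
    Matrix (α × β × μ) (α × β × μ) ℂ → Matrix (α × β × μ) (α × β × μ) ℂ :=
  fun ρ x y => Λ (fun p q => ρ (x.1, p) (y.1, q)) x.2 y.2

/-- The product state `σ_{AM} ⊗ σ_B` arranged on the tripartite space `A × (B × M)`. -/
def prodAMB {α β μ : Type*} (σAM : Matrix (α × μ) (α × μ) ℂ) (σB : Matrix β β ℂ) :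
    Matrix (α × β × μ) (α × β × μ) ℂ :=
  fun x y => σAM (x.1, x.2.2) (y.1, y.2.2) * σB x.2.1 y.2.1

/-- The product state `ρ_{AB} ⊗ σ_M` arranged on the tripartite space `A × (B × M)`. -/
def prodABM {α β μ : Type*} (ρAB : Matrix (α × β) (α × β) ℂ) (σM : Matrix μ μ ℂ) :
    Matrix (α × β × μ) (α × β × μ) ℂ :=
  fun x y => ρAB (x.1, x.2.1) (y.1, y.2.1) * σM x.2.2 y.2.2

/-- Partial trace over the mediator `M`. -/
noncomputable def ptraceM {α β μ : Type*} [Fintype μ] (X : Matrix (α × β × μ) (α × β × μ) ℂ) :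
    Matrix (α × β) (α × β) ℂ :=
  fun p q => ∑ m, X (p.1, p.2, m) (q.1, q.2, m)

/-- Partial trace over the second tensor factor. -/
noncomputable def ptrace2 {ι κ : Type*} [Fintype κ] (X : Matrix (ι × κ) (ι × κ) ℂ) : Matrix ι ι ℂ :=
  fun i j => ∑ k, X (i, k) (j, k)

/-- Partial trace over `B` and `M`. -/
noncomputable def ptraceBM {α β μ : Type*} [Fintype β] [Fintype μ] (X : Matrix (α × β × μ) (α × β × μ) ℂ) :
    Matrix α α ℂ :=
  fun a a' => ∑ b, ∑ m, X (a, b, m) (a', b, m)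

/-- The two-qubit `SWAP` unitary. -/
def SWAP : Matrix (Fin 2 × Fin 2) (Fin 2 × Fin 2) ℂ :=
  fun p q => if p.1 = q.2 ∧ p.2 = q.1 then 1 else 0


lemma trace_eq_of_cptp {ι κ : Type*} [Fintype ι] [DecidableEq ι] [Fintype κ] [DecidableEq κ]
    {Φ : Matrix ι ι ℂ → Matrix κ κ ℂ} (h : IsCPTP Φ) (Y : Matrix ι ι ℂ) :
    (Φ Y).trace = Y.trace := by
  obtain ⟨N, K, hK, hTP⟩ := h
  rw [hK, Matrix.trace_sum]
  calc ∑ i, (K i * Y * (K i)ᴴ).trace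
      = ∑ i, ((K i)ᴴ * K i * Y).trace := by
        refine Finset.sum_congr rfl fun i _ => ?_
        rw [Matrix.trace_mul_cycle]
    _ = ((∑ i, (K i)ᴴ * K i) * Y).trace := by rw [Finset.sum_mul, Matrix.trace_sum]
    _ = Y.trace := by rw [hTP, one_mul]

lemma map_sum_of_cptp {ι κ γ : Type*} [Fintype ι] [DecidableEq ι] [Fintype κ] [DecidableEq κ]
    {Φ : Matrix ι ι ℂ → Matrix κ κ ℂ} (h : IsCPTP Φ) (s : Finset γ) (Y : γ → Matrix ι ι ℂ) :
    Φ (∑ b ∈ s, Y b) = ∑ b ∈ s, Φ (Y b) := by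
  obtain ⟨N, K, hK, -⟩ := h
  simp only [hK]
  rw [Finset.sum_comm]
  refine Finset.sum_congr rfl fun i _ => ?_
  rw [Matrix.mul_sum, Matrix.sum_mul]

lemma ptrace2_ptraceM {α β μ : Type*} [Fintype β] [Fintype μ]
    (X : Matrix (α × β × μ) (α × β × μ) ℂ) :
    ptrace2 (ptraceM X) = ptraceBM X := by
  funext a a'
  simp [ptrace2, ptraceM, ptraceBM]

lemma ptraceBM_ExtBM {α β μ : Type*} [Fintype α] [Fintype β] [DecidableEq β]
    [Fintype μ] [DecidableEq μ]
    {Λ : Matrix (β × μ) (β × μ) ℂ → Matrix (β × μ) (β × μ) ℂ} (h : IsCPTP Λ)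
    (X : Matrix (α × β × μ) (α × β × μ) ℂ) :
    ptraceBM (ExtBM (α := α) Λ X) = ptraceBM X := by
  funext a a'
  have := trace_eq_of_cptp h (fun p q => X (a, p) (a', q))
  simpa [Matrix.trace, Matrix.diag, ptraceBM, ExtBM, Fintype.sum_prod_type] using this

lemma ptraceBM_ExtAM {α β μ : Type*} [Fintype α] [DecidableEq α] [Fintype β]
    [Fintype μ] [DecidableEq μ]
    {Λ : Matrix (α × μ) (α × μ) ℂ → Matrix (α × μ) (α × μ) ℂ} (h : IsCPTP Λ)
    (ρ : Matrix (α × β) (α × β) ℂ) (σ : Matrix μ μ ℂ) :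
    ptraceBM (ExtAM (β := β) Λ (prodABM ρ σ)) =
      fun a a' => ∑ m, Λ (fun p q => ptrace2 ρ p.1 q.1 * σ p.2 q.2) (a, m) (a', m) := by
  have hsum : (fun p q => ptrace2 ρ p.1 q.1 * σ p.2 q.2 : Matrix (α × μ) (α × μ) ℂ) =
      ∑ b : β, (fun p q : α × μ => ρ (p.1, b) (q.1, b) * σ p.2 q.2 : Matrix (α × μ) (α × μ) ℂ) := by
    funext p q
    simp [ptrace2, Matrix.sum_apply, Finset.sum_mul]
  funext a a'
  show (∑ b, ∑ m, Λ (fun p q => ρ (p.1, b) (q.1, b) * σ p.2 q.2) (a, m) (a', m)) = _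
  erw [hsum, map_sum_of_cptp h, Finset.sum_comm]
  simp [Matrix.sum_apply]

def bstate (v : Fin 2 × Fin 2) : Matrix (Fin 2 × Fin 2) (Fin 2 × Fin 2) ℂ :=
  fun p q => if p = v ∧ q = v then 1 else 0

lemma bstate_density (v : Fin 2 × Fin 2) : IsDensity (bstate v) := by
  constructor
  · set w : Matrix Unit (Fin 2 × Fin 2) ℂ := fun _ p => if p = v then 1 else 0 with hw
    have : bstate v = wᴴ * w := by
      funext p q
      simp only [Matrix.mul_apply, Matrix.conjTranspose_apply]
      by_cases hp : p = v <;> by_cases hq : q = v <;>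
        simp [bstate, hw, Matrix.mul_apply, Matrix.conjTranspose_apply, hp, hq]
    rw [this]
    exact Matrix.posSemidef_conjTranspose_mul_self _
  · simp [Matrix.trace, Matrix.diag, bstate]

lemma ptrace2_bstate (i j : Fin 2) :
    ptrace2 (bstate (i, j)) = fun a a' => if a = i ∧ a' = i then 1 else 0 := by
  funext a a'
  simp [ptrace2, bstate, Prod.ext_iff, Fin.sum_univ_two]
  fin_cases i <;> fin_cases j <;> fin_cases a <;> fin_cases a' <;> simp <;> decide

/-- The two-qubit SWAP channel has no decomposable dilation with any
finite-dimensional mediator: there are no mediator dimension `k`, mediator state `σ_M`, and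
CPTP maps `Λ_{AM}` (trivial on `B`) and `Λ_{BM}` (trivial on `A`) reproducing SWAP after
tracing out the mediator. -/
theorem swap_has_no_decomposable_dilation :
    ¬ ∃ (k : ℕ) (σM : Matrix (Fin k) (Fin k) ℂ)
        (ΛAM : Matrix (Fin 2 × Fin k) (Fin 2 × Fin k) ℂ →
          Matrix (Fin 2 × Fin k) (Fin 2 × Fin k) ℂ)
        (ΛBM : Matrix (Fin 2 × Fin k) (Fin 2 × Fin k) ℂ →
          Matrix (Fin 2 × Fin k) (Fin 2 × Fin k) ℂ),
      IsDensity σM ∧ IsCPTP ΛAM ∧ IsCPTP ΛBM ∧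
      ∀ ρ : Matrix (Fin 2 × Fin 2) (Fin 2 × Fin 2) ℂ, IsDensity ρ →
        ptraceM (ExtBM (β := Fin 2) ΛBM (ExtAM (β := Fin 2) ΛAM (prodABM ρ σM))) =
          SWAP * ρ * SWAPᴴ := by
  rintro ⟨k, σM, ΛAM, ΛBM, hσ, hAM, hBM, h⟩
  have e1 := congrArg ptrace2 (h (bstate (0, 0)) (bstate_density _))
  have e2 := congrArg ptrace2 (h (bstate (0, 1)) (bstate_density _))
  rw [ptrace2_ptraceM, ptraceBM_ExtBM hBM, ptraceBM_ExtAM hAM] at e1 e2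
  have hAeq : ptrace2 (bstate ((0 : Fin 2), (0 : Fin 2))) = ptrace2 (bstate (0, 1)) := by
    rw [ptrace2_bstate, ptrace2_bstate]
  have key : ptrace2 (SWAP * bstate (0, 0) * SWAPᴴ) = ptrace2 (SWAP * bstate (0, 1) * SWAPᴴ) := by
    rw [← e1, ← e2, hAeq]
  have h00 := congrFun (congrFun key 0) 0
  simp [ptrace2, bstate, SWAP, Matrix.mul_apply, Matrix.conjTranspose_apply,
    Fintype.sum_prod_type, Fin.sum_univ_two, Prod.ext_iff] at h00


end Stmt15
end
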